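/- arXiv:1911.05297 — 12 statements merged into one kernel-verified Lean document; each statement's English description precedes it below -/
import Mathlib

section
/- Let H be an inner product space (over ℝ or ℂ) of dimension at least two, let n ≥ 1, and let real coefficients a_B be given for each subset B ⊆ {1,…,n} with 1 ≤ |B| ≤ 2. Then the identity ∑_{B ⊆ {1,…,n}, 1 ≤ |B| ≤ 2} a_B ‖x_B‖² = 0 holds for all vectors x_1, …, x_n ∈ H if and only if a_B = 0 for every subset B ⊆ {1,…,n} with 1 ≤ |B| ≤ 2. -/
/-!
Evaluating at `x i = c i • e` for a fixed nonzero vector `e` turns the identity into the vanishing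
of the real quadratic form `q c = ∑ a_B (∑_{i ∈ B} c i)²`. Then `q (1ᵢ + 1ⱼ) - q (1ᵢ - 1ⱼ) = 4 a_{i,j}`
kills the coefficients of pairs, after which `q (1ᵢ) = a_{i}` kills those of singletons.
-/

open Finset

def smallSubsets (ι : Type*) [Fintype ι] : Finset (Finset ι) :=
  univ.filter fun B => 1 ≤ #B ∧ #B ≤ 2

lemma sum_mul_norm_sum_ofReal_smul_sq {ι 𝕜 E : Type*} [RCLike 𝕜] [SeminormedAddCommGroup E]
    [NormedSpace 𝕜 E] (S : Finset (Finset ι)) (a : Finset ι → ℝ) (c : ι → ℝ) (e : E) :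
    ∑ B ∈ S, a B * ‖∑ k ∈ B, (c k : 𝕜) • e‖ ^ 2 = (∑ B ∈ S, a B * (∑ k ∈ B, c k) ^ 2) * ‖e‖ ^ 2 := by
  rw [sum_mul]
  refine sum_congr rfl fun B _ => ?_
  rw [← sum_smul, norm_smul, ← RCLike.ofReal_sum, RCLike.norm_ofReal, mul_pow, sq_abs, mul_assoc]

namespace smallSubsets

variable {ι : Type*} [Fintype ι] [DecidableEq ι]

lemma eq_pair_of_mem {B : Finset ι} (hB : B ∈ smallSubsets ι) {i j : ι} (hij : i ≠ j)
    (hi : i ∈ B) (hj : j ∈ B) : B = {i, j} := by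
  have hcard : #B ≤ 2 := (mem_filter.mp hB).2.2
  refine (eq_of_subset_of_card_le ?_ ?_).symm
  · exact insert_subset hi (singleton_subset_iff.mpr hj)
  · rwa [card_pair hij]

variable {a : Finset ι → ℝ} (h : ∀ c : ι → ℝ, ∑ B ∈ smallSubsets ι, a B * (∑ k ∈ B, c k) ^ 2 = 0)
include h

lemma coeff_pair_eq_zero {i j : ι} (hij : i ≠ j) : a {i, j} = 0 := by
  have hdiff : ∀ B : Finset ι,
      (∑ k ∈ B, (Pi.single i 1 + Pi.single j 1 : ι → ℝ) k) ^ 2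
        - (∑ k ∈ B, (Pi.single i 1 - Pi.single j 1 : ι → ℝ) k) ^ 2
      = if i ∈ B ∧ j ∈ B then 4 else 0 := by
    intro B
    simp only [Pi.add_apply, Pi.sub_apply, sum_add_distrib, sum_sub_distrib, sum_pi_single']
    by_cases hi : i ∈ B <;> by_cases hj : j ∈ B <;> norm_num [hi, hj]
  have hsum : ∑ B ∈ smallSubsets ι, a B * (if i ∈ B ∧ j ∈ B then 4 else 0) = a {i, j} * 4 := by
    refine (sum_eq_single_of_mem {i, j} ?_ fun B hB hne => ?_).trans (by simp)
    · simp [smallSubsets, card_pair hij]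
    · rw [if_neg fun hij' => hne (eq_pair_of_mem hB hij hij'.1 hij'.2), mul_zero]
  have h4 : a {i, j} * 4 = 0 := calc
    _ = ∑ B ∈ smallSubsets ι, a B * (if i ∈ B ∧ j ∈ B then 4 else 0) := hsum.symm
    _ = ∑ B ∈ smallSubsets ι, a B * (∑ k ∈ B, (Pi.single i 1 + Pi.single j 1 : ι → ℝ) k) ^ 2
        - ∑ B ∈ smallSubsets ι, a B * (∑ k ∈ B, (Pi.single i 1 - Pi.single j 1 : ι → ℝ) k) ^ 2 := by
      simp only [← sum_sub_distrib, ← mul_sub, hdiff]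
    _ = 0 := by rw [h, h, sub_zero]
  simpa using h4

lemma coeff_singleton_eq_zero (i : ι) : a {i} = 0 := by
  have hsum : ∑ B ∈ smallSubsets ι, a B * (∑ k ∈ B, (Pi.single i 1 : ι → ℝ) k) ^ 2 = a {i} := by
    refine (sum_eq_single_of_mem {i} (by simp [smallSubsets]) fun B hB hne => ?_).trans (by simp)
    rw [sum_pi_single']
    split_ifs with hi
    · obtain ⟨j, hj, hji⟩ : ∃ j ∈ B, j ≠ i := by
        by_contra! hall
        exact hne (eq_singleton_iff_unique_mem.mpr ⟨hi, hall⟩)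
      rw [eq_pair_of_mem hB hji.symm hi hj, coeff_pair_eq_zero h hji.symm, zero_mul]
    · simp
  rw [← hsum, h]

lemma coeff_eq_zero {B : Finset ι} (hB : B ∈ smallSubsets ι) : a B = 0 := by
  have hcard := (mem_filter.mp hB).2
  obtain hB1 | hB2 : #B = 1 ∨ #B = 2 := by omega
  · obtain ⟨i, rfl⟩ := card_eq_one.mp hB1
    exact coeff_singleton_eq_zero h i
  · obtain ⟨i, j, hij, rfl⟩ := card_eq_two.mp hB2
    exact coeff_pair_eq_zero h hij

end smallSubsets

theorem stmt1_general {𝕜 H : Type*} [RCLike 𝕜] [NormedAddCommGroup H] [InnerProductSpace 𝕜 H]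
    (hdim : 2 ≤ Module.rank 𝕜 H) (n : ℕ)
    (a : Finset (Fin n) → ℝ) :
    (∀ x : Fin n → H,
        ∑ B ∈ (Finset.univ : Finset (Finset (Fin n))).filter
            (fun B => 1 ≤ B.card ∧ B.card ≤ 2),
          a B * ‖∑ i ∈ B, x i‖ ^ 2 = 0) ↔
      ∀ B : Finset (Fin n), 1 ≤ B.card → B.card ≤ 2 → a B = 0 := by
  refine ⟨fun h B hB1 hB2 => ?_, fun h x => sum_eq_zero fun B hB => ?_⟩
  · obtain ⟨e, he⟩ : ∃ e : H, e ≠ 0 :=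
      rank_pos_iff_exists_ne_zero.mp (lt_of_lt_of_le (by norm_num) hdim)
    refine smallSubsets.coeff_eq_zero (fun c => ?_) (mem_filter.mpr ⟨mem_univ B, hB1, hB2⟩)
    have hc := h fun k => (c k : 𝕜) • e
    rw [sum_mul_norm_sum_ofReal_smul_sq] at hc
    exact (mul_eq_zero.mp hc).resolve_right (by positivity)
  · obtain ⟨hB1, hB2⟩ := (mem_filter.mp hB).2
    rw [h B hB1 hB2, zero_mul]

theorem stmt1 {𝕜 H : Type*} [RCLike 𝕜] [NormedAddCommGroup H] [InnerProductSpace 𝕜 H]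
    (hdim : 2 ≤ Module.rank 𝕜 H) (n : ℕ) (hn : 1 ≤ n)
    (a : Finset (Fin n) → ℝ) :
    (∀ x : Fin n → H,
        ∑ B ∈ (Finset.univ : Finset (Finset (Fin n))).filter
            (fun B => 1 ≤ B.card ∧ B.card ≤ 2),
          a B * ‖∑ i ∈ B, x i‖ ^ 2 = 0) ↔
      ∀ B : Finset (Fin n), 1 ≤ B.card → B.card ≤ 2 → a B = 0 :=
  stmt1_general hdim n a
end

section
/- Let H be an inner product space (over ℝ or ℂ) of dimension at least two, let n ≥ 1, and let real coefficients c_A be given for each subset A ⊆ {1,…,n}. For each two-element subset B ⊆ {1,…,n}, set a_B = c_B + ∑_{A ⊆ {1,…,n}, |A| ≥ 3, B ⊆ A} c_A. Then the identity ∑_{A ⊆ {1,…,n}} c_A ‖x_A‖² = 0 holds for all x_1, …, x_n ∈ H if and only if both: (1) a_B = 0 for every two-element subset B ⊆ {1,…,n}, and (2) for every unit vector u ∈ H and every index 1 ≤ i ≤ n, the substitution x_i = u and x_j = 0 for all j ≠ i gives ∑_{A ⊆ {1,…,n}} c_A ‖x_A‖² = 0. -/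
/-!
Expanding `‖x_A‖² = ∑_{i,j ∈ A} Re⟪x_i, x_j⟫` rewrites the form as `∑_{i,j} S_{ij} Re⟪x_i, x_j⟫`
with `S_{ij} = ∑_{A ∋ i, j} c_A`, so it vanishes identically iff every `S_{ij}` does: take `x = u`
on `{i}`, then on `{i, j}`, for a unit vector `u`. For `i ≠ j`, `S_{ij}` is `a_{i,j}`, and the
substitution in (2) evaluates the form to `S_{ii}`.
-/

open Finset

section PairCoeff

variable {ι R : Type*} [Fintype ι] [DecidableEq ι]

def pairCoeff [AddCommMonoid R] (c : Finset ι → R) (i j : ι) : R :=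
  ∑ A with i ∈ A ∧ j ∈ A, c A

lemma pairCoeff_comm [AddCommMonoid R] (c : Finset ι → R) (i j : ι) :
    pairCoeff c i j = pairCoeff c j i := by
  simp only [pairCoeff, and_comm]

lemma pairCoeff_of_ne [AddCommMonoid R] (c : Finset ι → R) {i j : ι} (hij : i ≠ j) :
    pairCoeff c i j = c {i, j} + ∑ A with 3 ≤ #A ∧ {i, j} ⊆ A, c A := by
  have hcard : #{i, j} = 2 := card_pair hij
  have hsplit : univ.filter (fun A : Finset ι => i ∈ A ∧ j ∈ A) =
      insert {i, j} (univ.filter fun A => 3 ≤ #A ∧ {i, j} ⊆ A) := by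
    ext A
    simp only [mem_filter, mem_univ, true_and, mem_insert, insert_subset_iff,
      singleton_subset_iff]
    constructor
    · rintro ⟨hi, hj⟩
      have hsub : {i, j} ⊆ A := insert_subset hi (singleton_subset_iff.2 hj)
      rcases (hcard ▸ card_le_card hsub).lt_or_eq with hlt | heq
      · exact Or.inr ⟨hlt, hi, hj⟩
      · exact Or.inl (eq_of_subset_of_card_le hsub (hcard ▸ heq.ge)).symm
    · rintro (rfl | ⟨-, hi, hj⟩) <;> simp_all
  rw [pairCoeff, hsplit, sum_insert (by simp [hcard])]

lemma sum_mul_sum_sum_eq_sum_sum_pairCoeff_mul [CommSemiring R] (c : Finset ι → R)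
    (g : ι → ι → R) :
    ∑ A, c A * ∑ i ∈ A, ∑ j ∈ A, g i j = ∑ i, ∑ j, pairCoeff c i j * g i j := by
  simp only [pairCoeff, sum_mul, mul_sum]
  rw [sum_comm' (t' := univ) (s' := fun i => univ.filter (i ∈ ·)) (by simp)]
  refine sum_congr rfl fun i _ => ?_
  exact sum_comm' (by simp)

end PairCoeff

section InnerProductSpace

variable {H ι : Type*} [NormedAddCommGroup H]

lemma norm_sum_sq_eq_sum_sum_re_inner (𝕜 : Type*) [RCLike 𝕜] [InnerProductSpace 𝕜 H]
    (s : Finset ι) (x : ι → H) :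
    ‖∑ i ∈ s, x i‖ ^ 2 = ∑ i ∈ s, ∑ j ∈ s, RCLike.re (inner 𝕜 (x i) (x j)) := by
  rw [← inner_self_eq_norm_sq (𝕜 := 𝕜), sum_inner]
  simp only [inner_sum, map_sum]

lemma exists_norm_eq_one (𝕜 : Type*) [RCLike 𝕜] [NormedSpace 𝕜 H] [Nontrivial H] :
    ∃ u : H, ‖u‖ = 1 :=
  let ⟨_, hv⟩ := exists_ne (0 : H)
  ⟨_, norm_smul_inv_norm (𝕜 := 𝕜) hv⟩

variable [Fintype ι] [DecidableEq ι]

lemma sum_mul_norm_sum_sq_eq_sum_sum_pairCoeff (𝕜 : Type*) [RCLike 𝕜] [InnerProductSpace 𝕜 H]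
    (c : Finset ι → ℝ) (x : ι → H) :
    ∑ A, c A * ‖∑ i ∈ A, x i‖ ^ 2 =
      ∑ i, ∑ j, pairCoeff c i j * RCLike.re (inner 𝕜 (x i) (x j)) := by
  simp only [norm_sum_sq_eq_sum_sum_re_inner 𝕜]
  exact sum_mul_sum_sum_eq_sum_sum_pairCoeff_mul c _

lemma sum_mul_norm_sum_indicator_sq (𝕜 : Type*) [RCLike 𝕜] [InnerProductSpace 𝕜 H]
    (c : Finset ι → ℝ) (B : Finset ι) (u : H) :
    ∑ A, c A * ‖∑ i ∈ A, if i ∈ B then u else 0‖ ^ 2 =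
      ‖u‖ ^ 2 * ∑ i ∈ B, ∑ j ∈ B, pairCoeff c i j := by
  rw [sum_mul_norm_sum_sq_eq_sum_sum_pairCoeff 𝕜]
  have hterm (i j : ι) : RCLike.re (inner 𝕜 (if i ∈ B then u else 0) (if j ∈ B then u else 0)) =
      if i ∈ B ∧ j ∈ B then ‖u‖ ^ 2 else 0 := by
    split_ifs <;> simp_all
  simp [hterm, ite_and, sum_ite_mem, mul_sum, sum_mul, mul_comm]

lemma sum_mul_norm_sum_single_sq (𝕜 : Type*) [RCLike 𝕜] [InnerProductSpace 𝕜 H]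
    (c : Finset ι → ℝ) (u : H) (i : ι) :
    ∑ A, c A * ‖∑ j ∈ A, if j = i then u else 0‖ ^ 2 = ‖u‖ ^ 2 * pairCoeff c i i := by
  simpa using sum_mul_norm_sum_indicator_sq 𝕜 c {i} u

lemma forall_sum_mul_norm_sum_sq_eq_zero_iff (𝕜 : Type*) [RCLike 𝕜] [InnerProductSpace 𝕜 H]
    [Nontrivial H] (c : Finset ι → ℝ) :
    (∀ x : ι → H, ∑ A, c A * ‖∑ i ∈ A, x i‖ ^ 2 = 0) ↔ ∀ i j, pairCoeff c i j = 0 := by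
  refine ⟨fun h i j => ?_, fun h x => ?_⟩
  · obtain ⟨u, hu⟩ := exists_norm_eq_one (H := H) 𝕜
    have hdiag (k : ι) : pairCoeff c k k = 0 := by
      simpa [hu] using (sum_mul_norm_sum_indicator_sq 𝕜 c {k} u).symm.trans (h _)
    rcases eq_or_ne i j with rfl | hij
    · exact hdiag i
    · have hpair := (sum_mul_norm_sum_indicator_sq 𝕜 c {i, j} u).symm.trans (h _)
      simp only [hu, sum_pair hij, hdiag, pairCoeff_comm c j i] at hpair
      linarith
  · simp [sum_mul_norm_sum_sq_eq_sum_sum_pairCoeff 𝕜, h]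

end InnerProductSpace

theorem stmt2_general {𝕜 H : Type*} [RCLike 𝕜] [NormedAddCommGroup H] [InnerProductSpace 𝕜 H]
    (hdim : 2 ≤ Module.rank 𝕜 H) (n : ℕ)
    (c : Finset (Fin n) → ℝ) :
    (∀ x : Fin n → H, ∑ A : Finset (Fin n), c A * ‖∑ i ∈ A, x i‖ ^ 2 = 0) ↔
      ((∀ B : Finset (Fin n), B.card = 2 →
          c B + ∑ A ∈ (Finset.univ : Finset (Finset (Fin n))).filter
              (fun A => 3 ≤ A.card ∧ B ⊆ A), c A = 0) ∧
        (∀ u : H, ‖u‖ = 1 → ∀ i : Fin n,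
          ∑ A : Finset (Fin n),
            c A * ‖∑ j ∈ A, (if j = i then u else 0)‖ ^ 2 = 0)) := by
  have : Nontrivial H := rank_pos_iff_nontrivial (R := 𝕜).mp (lt_of_lt_of_le (by norm_num) hdim)
  obtain ⟨u, hu⟩ := exists_norm_eq_one (H := H) 𝕜
  rw [forall_sum_mul_norm_sum_sq_eq_zero_iff 𝕜]
  simp only [sum_mul_norm_sum_single_sq 𝕜]
  constructor
  · intro h
    refine ⟨fun B hB => ?_, fun _ _ i => by simp [h]⟩
    obtain ⟨i, j, hij, rfl⟩ := card_eq_two.1 hB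
    rw [← pairCoeff_of_ne c hij]
    exact h i j
  · rintro ⟨hoff, hdiag⟩ i j
    rcases eq_or_ne i j with rfl | hij
    · simpa [hu] using hdiag u hu i
    · rw [pairCoeff_of_ne c hij]
      exact hoff _ (card_pair hij)

theorem stmt2 {𝕜 H : Type*} [RCLike 𝕜] [NormedAddCommGroup H] [InnerProductSpace 𝕜 H]
    (hdim : 2 ≤ Module.rank 𝕜 H) (n : ℕ) (hn : 1 ≤ n)
    (c : Finset (Fin n) → ℝ) :
    (∀ x : Fin n → H, ∑ A : Finset (Fin n), c A * ‖∑ i ∈ A, x i‖ ^ 2 = 0) ↔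
      ((∀ B : Finset (Fin n), B.card = 2 →
          c B + ∑ A ∈ (Finset.univ : Finset (Finset (Fin n))).filter
              (fun A => 3 ≤ A.card ∧ B ⊆ A), c A = 0) ∧
        (∀ u : H, ‖u‖ = 1 → ∀ i : Fin n,
          ∑ A : Finset (Fin n),
            c A * ‖∑ j ∈ A, (if j = i then u else 0)‖ ^ 2 = 0)) :=
  stmt2_general hdim n c
end

section
/- Let H be an inner product space (over ℝ or ℂ). For all integers n > k ≥ 2 and all vectors x_1, …, x_n ∈ H, one has C(n−2, k−2) · ‖x_1 + ⋯ + x_n‖² = ∑_{A ⊆ {1,…,n}, |A| = k} ‖x_A‖² − C(n−2, k−1) · ∑_{i=1}^{n} ‖x_i‖², where C(m, j) denotes the binomial coefficient m choose j. -/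
open Finset

/-!
Expanding `‖x_A‖² = ∑_{i,j ∈ A} ⟪x_i, x_j⟫` and summing over the `k`-subsets `A`, the term
`⟪x_i, x_j⟫` is counted once for every `A ⊇ {i, j}`: `C(n-2, k-2)` times when `i ≠ j`, and
`C(n-1, k-1) = C(n-2, k-2) + C(n-2, k-1)` times when `i = j`.
-/

section PairCounting

variable {ι : Type*} [DecidableEq ι]

theorem sum_powersetCard_sum_sum {M : Type*} [AddCommMonoid M] (s : Finset ι) (k : ℕ)
    (f : ι → ι → M) :
    ∑ A ∈ powersetCard k s, ∑ i ∈ A, ∑ j ∈ A, f i j =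
      ∑ i ∈ s, ∑ j ∈ s, #{A ∈ powersetCard k s | {i, j} ⊆ A} • f i j := by
  simp_rw [← sum_product', ← sum_const]
  refine sum_comm' fun A p => ?_
  simp only [mem_product, mem_filter, mem_powersetCard, insert_subset_iff, singleton_subset_iff]
  exact ⟨fun ⟨hA, hi, hj⟩ => ⟨⟨hA, hi, hj⟩, hA.1 hi, hA.1 hj⟩, fun ⟨h, _⟩ => h⟩

theorem card_filter_powersetCard_pair_subset (s : Finset ι) {k : ℕ} {i j : ι} (hi : i ∈ s)
    (hj : j ∈ s) (hk : 2 ≤ k) (hs : 2 ≤ #s) :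
    #{A ∈ powersetCard k s | {i, j} ⊆ A} =
      (#s - 2).choose (k - 2) + if i = j then (#s - 2).choose (k - 1) else 0 := by
  by_cases hij : i = j
  · subst hij
    rw [pair_eq_singleton, card_filter_powersetCard_subset _ _ _ (by simpa) (by simp; omega),
      if_pos rfl, card_singleton]
    obtain ⟨m, hm⟩ : ∃ m, #s = m + 2 := ⟨#s - 2, by omega⟩
    obtain ⟨l, rfl⟩ : ∃ l, k = l + 2 := ⟨k - 2, by omega⟩
    simp [hm, Nat.choose_succ_succ']
  · rw [card_filter_powersetCard_subset _ _ _ (by simp [insert_subset_iff, hi, hj]) (by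
      rw [card_pair hij]; omega), card_pair hij, if_neg hij, add_zero]

end PairCounting

section InnerProductSpace

open RealInnerProductSpace

variable {ι E : Type*} [NormedAddCommGroup E] [InnerProductSpace ℝ E]

theorem norm_sum_sq_eq_sum_sum_inner (s : Finset ι) (x : ι → E) :
    ‖∑ i ∈ s, x i‖ ^ 2 = ∑ i ∈ s, ∑ j ∈ s, ⟪x i, x j⟫ := by
  rw [← real_inner_self_eq_norm_sq, sum_inner]
  simp only [inner_sum]

theorem sum_powersetCard_norm_sum_sq [DecidableEq ι] (s : Finset ι) (x : ι → E) {k : ℕ}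
    (hk : 2 ≤ k) (hs : 2 ≤ #s) :
    ∑ A ∈ powersetCard k s, ‖∑ i ∈ A, x i‖ ^ 2 =
      (#s - 2).choose (k - 2) * ‖∑ i ∈ s, x i‖ ^ 2 +
        (#s - 2).choose (k - 1) * ∑ i ∈ s, ‖x i‖ ^ 2 := by
  simp_rw [norm_sum_sq_eq_sum_sum_inner, sum_powersetCard_sum_sum]
  calc _ = ∑ i ∈ s, ∑ j ∈ s, (((#s - 2).choose (k - 2) : ℝ) * ⟪x i, x j⟫ +
        if i = j then ((#s - 2).choose (k - 1) : ℝ) * ‖x i‖ ^ 2 else 0) := by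
        refine sum_congr rfl fun i hi => sum_congr rfl fun j hj => ?_
        rw [card_filter_powersetCard_pair_subset s hi hj hk hs, nsmul_eq_mul]
        split_ifs with hij
        · subst hij; push_cast; rw [real_inner_self_eq_norm_sq]; ring
        · simp
    _ = _ := by simp [sum_add_distrib, mul_sum]

end InnerProductSpace

theorem stmt3 {𝕜 H : Type*} [RCLike 𝕜] [NormedAddCommGroup H] [InnerProductSpace 𝕜 H]
    (n k : ℕ) (hk : 2 ≤ k) (hkn : k < n) (x : Fin n → H) :
    ((n - 2).choose (k - 2) : ℝ) * ‖∑ i, x i‖ ^ 2 =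
      (∑ A ∈ Finset.powersetCard k (Finset.univ : Finset (Fin n)), ‖∑ i ∈ A, x i‖ ^ 2) -
        ((n - 2).choose (k - 1) : ℝ) * ∑ i, ‖x i‖ ^ 2 := by
  let := InnerProductSpace.rclikeToReal 𝕜 H
  rw [sum_powersetCard_norm_sum_sq univ x hk (by simp; omega), card_univ, Fintype.card_fin]
  ring
end

section
/- Let H be an inner product space (over ℝ or ℂ) of dimension at least two, let n ≥ 2, let a_1, …, a_n be fixed real numbers, and let 𝒥 be a collection of subsets of {1,…,n}. For I ⊆ {1,…,n} set a_I = ∏_{i ∈ I} a_i. Then the identity ∑_{I ∈ 𝒥} a_I · ∑_{J ⊆ I} ‖x_J − x_{I∖J}‖² = 0 holds for all vectors x_1, …, x_n ∈ H if and only if for each i ∈ {1,…,n} one has ∑_{I ∈ 𝒥, i ∈ I} 2^{|I|} · a_I = 0. -/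
open Finset

lemma key_powerset_sum {𝕜 H : Type*} [RCLike 𝕜] [NormedAddCommGroup H]
    [InnerProductSpace 𝕜 H] {n : ℕ} (x : Fin n → H) (I : Finset (Fin n)) :
    ∑ J ∈ I.powerset, ‖(∑ i ∈ J, x i) - ∑ i ∈ I \ J, x i‖ ^ 2
      = 2 ^ I.card * ∑ i ∈ I, ‖x i‖ ^ 2 := by
  induction I using Finset.induction with
  | empty => simp
  | @insert a I ha ih =>
    rw [Finset.sum_powerset_insert ha]
    have hstep : ∀ J ∈ I.powerset,
        ‖(∑ i ∈ J, x i) - ∑ i ∈ insert a I \ J, x i‖ ^ 2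
          + ‖(∑ i ∈ insert a J, x i) - ∑ i ∈ insert a I \ insert a J, x i‖ ^ 2
        = 2 * (‖(∑ i ∈ J, x i) - ∑ i ∈ I \ J, x i‖ ^ 2 + ‖x a‖ ^ 2) := by
      intro J hJ
      rw [Finset.mem_powerset] at hJ
      have haJ : a ∉ J := fun h => ha (hJ h)
      have h1 : insert a I \ J = insert a (I \ J) := by
        ext b; simp only [Finset.mem_sdiff, Finset.mem_insert]
        constructor
        · rintro ⟨h | h, hb⟩
          · exact Or.inl h
          · exact Or.inr ⟨h, hb⟩
        · rintro (h | ⟨h, hb⟩)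
          · exact ⟨Or.inl h, h ▸ haJ⟩
          · exact ⟨Or.inr h, hb⟩
      have h2 : insert a I \ insert a J = I \ J := by
        ext b; simp only [Finset.mem_sdiff, Finset.mem_insert, not_or]
        constructor
        · rintro ⟨h | h, hb1, hb2⟩
          · exact absurd h hb1
          · exact ⟨h, hb2⟩
        · rintro ⟨h, hb⟩
          exact ⟨Or.inr h, fun he => ha (he ▸ h), hb⟩
      have haIJ : a ∉ I \ J := fun h => ha (Finset.mem_sdiff.mp h).1
      rw [h1, h2, Finset.sum_insert haIJ, Finset.sum_insert haJ]
      set S := ∑ i ∈ J, x i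
      set T := ∑ i ∈ I \ J, x i
      have e1 : S - (x a + T) = -(x a - (S - T)) := by abel
      have e2 : (x a + S) - T = x a + (S - T) := by abel
      rw [e1, e2, norm_neg]
      have := parallelogram_law_with_norm 𝕜 (x a) (S - T)
      nlinarith [this, norm_nonneg (x a + (S - T)), norm_nonneg (x a - (S - T))]
    rw [← Finset.sum_add_distrib, Finset.sum_congr rfl hstep, Finset.sum_congr rfl
      (fun J _ => mul_add 2 _ _), Finset.sum_add_distrib, ← Finset.mul_sum, ih,
      Finset.sum_const, Finset.card_powerset, Finset.sum_insert ha,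
      Finset.card_insert_of_notMem ha]
    ring

theorem stmt5 {𝕜 H : Type*} [RCLike 𝕜] [NormedAddCommGroup H] [InnerProductSpace 𝕜 H]
    (hdim : 2 ≤ Module.rank 𝕜 H) (n : ℕ) (hn : 2 ≤ n)
    (a : Fin n → ℝ) (𝒥 : Finset (Finset (Fin n))) :
    (∀ x : Fin n → H,
        ∑ I ∈ 𝒥, (∏ i ∈ I, a i) *
          ∑ J ∈ I.powerset, ‖(∑ i ∈ J, x i) - ∑ i ∈ I \ J, x i‖ ^ 2 = 0) ↔
      ∀ i : Fin n,
        ∑ I ∈ 𝒥.filter (fun I => i ∈ I), (2 : ℝ) ^ I.card * ∏ j ∈ I, a j = 0 := by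
  set c : Fin n → ℝ :=
    fun i => ∑ I ∈ 𝒥.filter (fun I => i ∈ I), (2 : ℝ) ^ I.card * ∏ j ∈ I, a j with hc
  have hmain : ∀ x : Fin n → H,
      ∑ I ∈ 𝒥, (∏ i ∈ I, a i) *
        ∑ J ∈ I.powerset, ‖(∑ i ∈ J, x i) - ∑ i ∈ I \ J, x i‖ ^ 2
      = ∑ i : Fin n, c i * ‖x i‖ ^ 2 := by
    intro x
    calc ∑ I ∈ 𝒥, (∏ i ∈ I, a i) *
          ∑ J ∈ I.powerset, ‖(∑ i ∈ J, x i) - ∑ i ∈ I \ J, x i‖ ^ 2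
        = ∑ I ∈ 𝒥, ∑ i : Fin n,
            (if i ∈ I then (2 : ℝ) ^ I.card * (∏ j ∈ I, a j) * ‖x i‖ ^ 2 else 0) := by
          refine Finset.sum_congr rfl fun I _ => ?_
          rw [key_powerset_sum (𝕜 := 𝕜), Finset.sum_ite_mem, Finset.univ_inter,
            Finset.mul_sum, Finset.mul_sum]
          exact Finset.sum_congr rfl fun i _ => by ring
      _ = ∑ i : Fin n, ∑ I ∈ 𝒥,
            (if i ∈ I then (2 : ℝ) ^ I.card * (∏ j ∈ I, a j) * ‖x i‖ ^ 2 else 0) :=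
          Finset.sum_comm
      _ = ∑ i : Fin n, c i * ‖x i‖ ^ 2 := by
          refine Finset.sum_congr rfl fun i _ => ?_
          simp only [hc]
          rw [Finset.sum_mul, Finset.sum_filter]
  constructor
  · intro h i
    have : Nontrivial H :=
      rank_pos_iff_nontrivial (R := 𝕜).mp (lt_of_lt_of_le (by norm_num) hdim)
    obtain ⟨v, hv⟩ := exists_ne (0 : H)
    have hx := h (fun j => if j = i then v else 0)
    rw [hmain] at hx
    have : ∑ j : Fin n, c j * ‖(if j = i then v else (0 : H))‖ ^ 2 = c i * ‖v‖ ^ 2 := by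
      rw [Finset.sum_eq_single i]
      · simp
      · intro b _ hb; simp [hb]
      · intro hi; exact absurd (Finset.mem_univ i) hi
    rw [this] at hx
    have hv2 : ‖v‖ ^ 2 ≠ 0 := pow_ne_zero 2 (norm_ne_zero_iff.mpr hv)
    exact (mul_eq_zero.mp hx).resolve_right hv2
  · intro h x
    rw [hmain]
    simp only [hc]
    simp [h]
end

section
/- Let H be an inner product space (over ℝ or ℂ) of dimension at least two, let n ≥ 2, and let a_1, …, a_n be real numbers such that there exist indices i ≠ j with a_i = a_j = −1/2. Then for all vectors x_1, …, x_n ∈ H one has ∑_{∅ ≠ I ⊆ {1,…,n}} (∏_{i ∈ I} a_i) · ∑_{J ⊆ I} ‖x_J − x_{I∖J}‖² = 0, where the outer sum ranges over all nonempty subsets I of {1,…,n}. (Equivalently, ∑_{k=1}^{n} ∑_{1 ≤ i_1 < ⋯ < i_k ≤ n} a_{i_1}⋯a_{i_k} ∑_{ε_1,…,ε_k ∈ {1,−1}} ‖ε_1 x_{i_1} + ⋯ + ε_k x_{i_k}‖² = 0.) -/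
open Finset

lemma signSumAux {𝕜 H : Type*} [RCLike 𝕜] [NormedAddCommGroup H] [InnerProductSpace 𝕜 H]
    {ι : Type*} [DecidableEq ι] (x : ι → H) (I : Finset ι) :
    ∑ J ∈ I.powerset, ‖(∑ i ∈ J, x i) - ∑ i ∈ I \ J, x i‖ ^ 2
      = 2 ^ I.card * ∑ i ∈ I, ‖x i‖ ^ 2 := by
  classical
  induction I using Finset.induction_on with
  | empty => simp
  | @insert b s hb ih =>
    rw [Finset.sum_powerset_insert hb]
    have h1 : ∀ J ∈ s.powerset, insert b s \ J = insert b (s \ J) := by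
      intro J hJ
      rw [mem_powerset] at hJ
      ext y; simp only [mem_sdiff, mem_insert]
      constructor
      · rintro ⟨h | h, h2⟩
        · exact Or.inl h
        · exact Or.inr ⟨h, h2⟩
      · rintro (rfl | ⟨h, h2⟩)
        · exact ⟨Or.inl rfl, fun hc => hb (hJ hc)⟩
        · exact ⟨Or.inr h, h2⟩
    have h2 : ∀ J ∈ s.powerset, insert b s \ insert b J = s \ J := by
      intro J hJ
      rw [mem_powerset] at hJ
      ext y; simp only [mem_sdiff, mem_insert]
      constructor
      · rintro ⟨h | h, h2⟩
        · exact absurd (Or.inl h) h2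
        · exact ⟨h, fun hc => h2 (Or.inr hc)⟩
      · rintro ⟨h, h2⟩
        exact ⟨Or.inr h, by rintro (rfl | hc) <;> [exact hb h; exact h2 hc]⟩
    have key : (∑ J ∈ s.powerset, ‖(∑ i ∈ J, x i) - ∑ i ∈ insert b s \ J, x i‖ ^ 2)
        + ∑ J ∈ s.powerset, ‖(∑ i ∈ insert b J, x i) - ∑ i ∈ insert b s \ insert b J, x i‖ ^ 2
        = ∑ J ∈ s.powerset,
            (2 * ‖(∑ i ∈ J, x i) - ∑ i ∈ s \ J, x i‖ ^ 2 + 2 * ‖x b‖ ^ 2) := by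
      rw [← Finset.sum_add_distrib]
      refine Finset.sum_congr rfl fun J hJ => ?_
      rw [h1 J hJ, h2 J hJ]
      have hbJ : b ∉ J := fun hc => hb (mem_powerset.mp hJ hc)
      have hbsJ : b ∉ s \ J := fun hc => hb (mem_sdiff.mp hc).1
      rw [Finset.sum_insert hbsJ, Finset.sum_insert hbJ]
      set v := (∑ i ∈ J, x i) - ∑ i ∈ s \ J, x i with hv
      have e1 : (∑ i ∈ J, x i) - (x b + ∑ i ∈ s \ J, x i) = v - x b := by
        rw [hv]; abel
      have e2 : (x b + ∑ i ∈ J, x i) - ∑ i ∈ s \ J, x i = v + x b := by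
        rw [hv]; abel
      rw [e1, e2]
      have := @parallelogram_law_with_norm 𝕜 H _ _ _ v (x b)
      nlinarith [this]
    rw [key, Finset.sum_add_distrib, Finset.sum_const,
      Finset.card_powerset, Finset.card_insert_of_notMem hb, Finset.sum_insert hb,
      ← Finset.mul_sum, ih, nsmul_eq_mul]
    push_cast
    ring

lemma keyCombin {n : ℕ} (b : Fin n → ℝ) (p : Fin n) :
    ∑ I ∈ (Finset.univ : Finset (Finset (Fin n))), (if p ∈ I then ∏ j ∈ I, b j else 0)
      = b p * ∏ j ∈ Finset.univ.erase p, (b j + 1) := by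
  classical
  have hp : p ∉ (Finset.univ : Finset (Fin n)).erase p := notMem_erase _ _
  have huniv : (Finset.univ : Finset (Finset (Fin n)))
      = (insert p ((Finset.univ : Finset (Fin n)).erase p)).powerset := by
    rw [insert_erase (mem_univ p), powerset_univ]
  rw [huniv, Finset.sum_powerset_insert hp]
  have e1 : ∑ J ∈ ((Finset.univ : Finset (Fin n)).erase p).powerset,
      (if p ∈ J then ∏ j ∈ J, b j else 0) = 0 := by
    refine Finset.sum_eq_zero fun J hJ => ?_
    rw [if_neg (fun hc => hp (mem_powerset.mp hJ hc))]
  rw [e1, zero_add]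
  have e2 : ∀ J ∈ ((Finset.univ : Finset (Fin n)).erase p).powerset,
      (if p ∈ insert p J then ∏ j ∈ insert p J, b j else 0) = b p * ∏ j ∈ J, b j := by
    intro J hJ
    rw [if_pos (mem_insert_self _ _),
      Finset.prod_insert (fun hc => hp (mem_powerset.mp hJ hc))]
  rw [Finset.sum_congr rfl e2, ← Finset.mul_sum, Finset.prod_add]
  simp

theorem stmt6 {𝕜 H : Type*} [RCLike 𝕜] [NormedAddCommGroup H] [InnerProductSpace 𝕜 H]
    (hdim : 2 ≤ Module.rank 𝕜 H) (n : ℕ) (hn : 2 ≤ n)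
    (a : Fin n → ℝ) (i j : Fin n) (hij : i ≠ j)
    (hi : a i = -1/2) (hj : a j = -1/2) (x : Fin n → H) :
    ∑ I ∈ (Finset.univ : Finset (Finset (Fin n))).filter (fun I => I.Nonempty),
      (∏ i ∈ I, a i) * ∑ J ∈ I.powerset, ‖(∑ i ∈ J, x i) - ∑ i ∈ I \ J, x i‖ ^ 2 = 0 := by
  classical
  have hext : ∑ I ∈ (Finset.univ : Finset (Finset (Fin n))).filter (fun I => I.Nonempty),
      (∏ i ∈ I, a i) * ∑ J ∈ I.powerset, ‖(∑ i ∈ J, x i) - ∑ i ∈ I \ J, x i‖ ^ 2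
      = ∑ I ∈ (Finset.univ : Finset (Finset (Fin n))),
      (∏ i ∈ I, a i) * ∑ J ∈ I.powerset, ‖(∑ i ∈ J, x i) - ∑ i ∈ I \ J, x i‖ ^ 2 := by
    refine Finset.sum_subset (filter_subset _ _) fun I _ hI => ?_
    have : I = ∅ := by
      by_contra hc
      exact hI (mem_filter.mpr ⟨mem_univ _, nonempty_iff_ne_empty.mpr hc⟩)
    subst this; simp
  rw [hext]
  have step1 : ∀ I : Finset (Fin n),
      (∏ i ∈ I, a i) * ∑ J ∈ I.powerset, ‖(∑ i ∈ J, x i) - ∑ i ∈ I \ J, x i‖ ^ 2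
      = ∑ p ∈ Finset.univ, (if p ∈ I then (∏ j ∈ I, (2 * a j)) * ‖x p‖ ^ 2 else 0) := by
    intro I
    rw [signSumAux (𝕜 := 𝕜), Finset.prod_mul_distrib, Finset.prod_const]
    rw [Finset.sum_ite_mem, univ_inter, ← Finset.mul_sum, Finset.mul_sum, ← Finset.mul_sum]
    ring
  rw [Finset.sum_congr rfl fun I _ => step1 I, Finset.sum_comm]
  refine Finset.sum_eq_zero fun p _ => ?_
  have : ∀ I : Finset (Fin n),
      (if p ∈ I then (∏ j ∈ I, (2 * a j)) * ‖x p‖ ^ 2 else 0)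
      = (if p ∈ I then ∏ j ∈ I, (2 * a j) else 0) * ‖x p‖ ^ 2 := by
    intro I; split <;> simp
  rw [Finset.sum_congr rfl fun I _ => this I, ← Finset.sum_mul, keyCombin]
  have : ∃ k, k ≠ p ∧ a k = -1/2 := by
    rcases eq_or_ne p i with rfl | hpi
    · exact ⟨j, fun hc => hij hc.symm, hj⟩
    · exact ⟨i, fun hc => hpi hc.symm, hi⟩
  obtain ⟨k, hk, hak⟩ := this
  have : ∏ j ∈ Finset.univ.erase p, (2 * a j + 1) = 0 :=
    Finset.prod_eq_zero (mem_erase.mpr ⟨hk, mem_univ _⟩) (by rw [hak]; ring)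
  rw [this]; ring
end

section
/- Let H be an inner product space (over ℝ or ℂ) of dimension at least two. For every integer n ≥ 2 and all vectors x_1, …, x_n ∈ H, the parallelopiped law holds: ∑_{k=1}^{n} (−1)^k 2^{n−k} ∑_{I ⊆ {1,…,n}, |I| = k} ∑_{J ⊆ I} ‖x_J − x_{I∖J}‖² = 0. (Equivalently, ∑_{k=1}^{n} ∑_{1 ≤ i_1 < ⋯ < i_k ≤ n} (−1)^k 2^{n−k} ∑_{ε_1,…,ε_k ∈ {1,−1}} ‖ε_1 x_{i_1} + ⋯ + ε_k x_{i_k}‖² = 0.) -/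
/-!
Summing over the signs of one vector at a time, the parallelogram law gives
`∑_{J ⊆ I} ‖x_J - x_{I∖J}‖² = 2^{|I|} ∑_{i ∈ I} ‖x_i‖²`. Each `x_i` lies in `C(n-1, k-1)` of the
`k`-subsets of `{1, …, n}`, so the `k`-th term of the law is `(-1)^k 2^n C(n-1, k-1) ∑_i ‖x_i‖²`,
and the alternating sum of the binomial coefficients `C(n-1, ·)` vanishes since `n - 1 ≠ 0`.
-/

open Finset

theorem sum_powerset_norm_sub_sq {𝕜 H ι : Type*} [RCLike 𝕜] [NormedAddCommGroup H]
    [InnerProductSpace 𝕜 H] [DecidableEq ι] (x : ι → H) (I : Finset ι) :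
    ∑ J ∈ I.powerset, ‖(∑ i ∈ J, x i) - ∑ i ∈ I \ J, x i‖ ^ 2
      = 2 ^ #I * ∑ i ∈ I, ‖x i‖ ^ 2 := by
  induction I using Finset.induction with
  | empty => simp
  | @insert a I ha ih =>
    have signs_of_a : ∀ J ∈ I.powerset,
        ‖(∑ i ∈ J, x i) - ∑ i ∈ insert a I \ J, x i‖ ^ 2
          + ‖(∑ i ∈ insert a J, x i) - ∑ i ∈ insert a I \ insert a J, x i‖ ^ 2
          = 2 * ‖(∑ i ∈ J, x i) - ∑ i ∈ I \ J, x i‖ ^ 2 + 2 * ‖x a‖ ^ 2 := by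
      intro J hJ
      have haJ : a ∉ J := fun h => ha (mem_powerset.1 hJ h)
      rw [insert_sdiff_of_notMem _ haJ, insert_sdiff_insert, sdiff_insert_of_notMem ha,
        sum_insert (fun h => ha (mem_sdiff.1 h).1), sum_insert haJ]
      generalize ∑ i ∈ J, x i = u, ∑ i ∈ I \ J, x i = w
      rw [show u - (x a + w) = (u - w) - x a by abel, show x a + u - w = (u - w) + x a by abel]
      linarith [parallelogram_law_with_norm 𝕜 (u - w) (x a)]
    rw [sum_powerset_insert ha, ← sum_add_distrib, sum_congr rfl signs_of_a, sum_add_distrib,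
      ← mul_sum, ih, sum_const, card_powerset, nsmul_eq_mul, card_insert_of_notMem ha,
      sum_insert ha]
    push_cast
    ring

theorem sum_powersetCard_succ_sum {ι M : Type*} [DecidableEq ι] [AddCommMonoid M]
    (s : Finset ι) (k : ℕ) (f : ι → M) :
    ∑ I ∈ s.powersetCard (k + 1), ∑ i ∈ I, f i = (#s - 1).choose k • ∑ i ∈ s, f i := by
  rw [sum_comm' (t' := s) (s' := fun i => (s.powersetCard (k + 1)).filter (i ∈ ·))]
  · rw [smul_sum]
    refine sum_congr rfl fun i hi => ?_
    have hcount : #((s.powersetCard (k + 1)).filter (i ∈ ·)) = (#s - 1).choose k := by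
      simpa using card_filter_powersetCard_subset {i} s (k + 1) (singleton_subset_iff.2 hi)
    rw [sum_const, hcount]
  · intro I i
    simp only [mem_powersetCard, mem_filter]
    exact ⟨fun ⟨hI, hi⟩ => ⟨⟨hI, hi⟩, hI.1 hi⟩, And.left⟩

theorem alternating_sum_range_choose_of_ne_zero {R : Type*} [Ring R] {m : ℕ} (hm : m ≠ 0) :
    ∑ k ∈ range (m + 1), (-1 : R) ^ k * m.choose k = 0 := by
  simpa using congrArg (Int.cast : ℤ → R) (Int.alternating_sum_range_choose_of_ne hm)

theorem stmt7_general {𝕜 H : Type*} [RCLike 𝕜] [NormedAddCommGroup H] [InnerProductSpace 𝕜 H]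
    (n : ℕ) (hn : 2 ≤ n) (x : Fin n → H) :
    ∑ k ∈ Finset.Icc 1 n, (-1 : ℝ) ^ k * 2 ^ (n - k) *
      ∑ I ∈ Finset.powersetCard k (Finset.univ : Finset (Fin n)),
        ∑ J ∈ I.powerset, ‖(∑ i ∈ J, x i) - ∑ i ∈ I \ J, x i‖ ^ 2 = 0 := by
  obtain ⟨m, rfl⟩ : ∃ m, n = m + 1 := ⟨n - 1, by omega⟩
  have term_eq : ∀ k ∈ range (m + 1),
      (-1 : ℝ) ^ (1 + k) * 2 ^ (m + 1 - (1 + k)) *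
        ∑ I ∈ powersetCard (1 + k) (univ : Finset (Fin (m + 1))),
          ∑ J ∈ I.powerset, ‖(∑ i ∈ J, x i) - ∑ i ∈ I \ J, x i‖ ^ 2
        = -(2 ^ (m + 1) * ∑ i, ‖x i‖ ^ 2) * ((-1) ^ k * m.choose k) := by
    intro k hk
    have hkm : k ≤ m := Nat.lt_succ_iff.1 (mem_range.1 hk)
    rw [add_comm 1 k]
    simp_rw [sum_powerset_norm_sub_sq (𝕜 := 𝕜)]
    rw [sum_congr rfl fun I hI => by rw [(mem_powersetCard.1 hI).2], ← mul_sum,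
      sum_powersetCard_succ_sum, card_univ, Fintype.card_fin, Nat.add_sub_cancel, nsmul_eq_mul,
      show m + 1 - (k + 1) = m - k by omega,
      show (2 : ℝ) ^ (m + 1) = 2 ^ (m - k) * 2 ^ (k + 1) by rw [← pow_add]; congr 1; omega]
    ring
  rw [← Ico_add_one_right_eq_Icc, sum_Ico_eq_sum_range, Nat.add_sub_cancel, sum_congr rfl term_eq,
    ← mul_sum, alternating_sum_range_choose_of_ne_zero (by omega), mul_zero]

theorem stmt7 {𝕜 H : Type*} [RCLike 𝕜] [NormedAddCommGroup H] [InnerProductSpace 𝕜 H]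
    (hdim : 2 ≤ Module.rank 𝕜 H) (n : ℕ) (hn : 2 ≤ n) (x : Fin n → H) :
    ∑ k ∈ Finset.Icc 1 n, (-1 : ℝ) ^ k * 2 ^ (n - k) *
      ∑ I ∈ Finset.powersetCard k (Finset.univ : Finset (Fin n)),
        ∑ J ∈ I.powerset, ‖(∑ i ∈ J, x i) - ∑ i ∈ I \ J, x i‖ ^ 2 = 0 :=
  stmt7_general (𝕜 := 𝕜) n hn x
end

section
/- Let H be a normed space, let n ≥ 1, and let real coefficients c_B be given for each subset B ⊆ {1,…,n}. Suppose the identity ∑_{B ⊆ {1,…,n}} c_B ‖x_B‖² = 0 holds for all x_1, …, x_n ∈ H, and that c_B ≠ 0 for some nonempty B. Then there exist a nonempty subset A ⊆ {1,…,n} and real coefficients a_B for B ⊆ A with a_A ≠ 0 such that the identity ∑_{B ⊆ A} a_B ‖x_B‖² = 0 holds for all choices of vectors x_i ∈ H, i ∈ A. -/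
open Finset

theorem stmt8 {H : Type*} [NormedAddCommGroup H] [NormedSpace ℝ H]
    (n : ℕ) (hn : 1 ≤ n) (c : Finset (Fin n) → ℝ)
    (hc : ∀ x : Fin n → H, ∑ B : Finset (Fin n), c B * ‖∑ i ∈ B, x i‖ ^ 2 = 0)
    (hex : ∃ B : Finset (Fin n), B.Nonempty ∧ c B ≠ 0) :
    ∃ A : Finset (Fin n), A.Nonempty ∧ ∃ a : Finset (Fin n) → ℝ, a A ≠ 0 ∧
      ∀ x : Fin n → H, ∑ B ∈ A.powerset, a B * ‖∑ i ∈ B, x i‖ ^ 2 = 0 := by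
  classical
  set T : Finset (Finset (Fin n)) :=
    Finset.univ.filter (fun B => B.Nonempty ∧ c B ≠ 0) with hT
  have hTne : T.Nonempty := by
    obtain ⟨B, hB1, hB2⟩ := hex
    exact ⟨B, by simp [hT, hB1, hB2]⟩
  obtain ⟨A, hAT, hAmax⟩ := T.exists_max_image Finset.card hTne
  have hAprop : A.Nonempty ∧ c A ≠ 0 := by simpa [hT] using hAT
  -- strict supersets of A have coefficient 0
  have hsup : ∀ B : Finset (Fin n), A ⊆ B → B ≠ A → c B = 0 := by
    intro B hAB hBA
    by_contra hcB
    have hBne : B.Nonempty := hAprop.1.mono hAB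
    have hBT : B ∈ T := by simp [hT, hBne, hcB]
    have hlt : A.card < B.card := Finset.card_lt_card (lt_of_le_of_ne hAB (Ne.symm hBA))
    exact absurd (hAmax B hBT) (not_le_of_gt hlt)
  refine ⟨A, hAprop.1, fun S => ∑ B ∈ Finset.univ.filter (fun B => B ∩ A = S), c B, ?_, ?_⟩
  · have : ∑ B ∈ Finset.univ.filter (fun B => B ∩ A = A), c B = c A := by
      rw [Finset.sum_eq_single A]
      · intro B hB hBA
        have hAB : A ⊆ B := by
          have : B ∩ A = A := (Finset.mem_filter.mp hB).2
          exact fun i hi => (Finset.mem_inter.mp (this ▸ hi)).1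
        exact hsup B hAB hBA
      · intro h
        exact absurd (by simp) h
    show (∑ B ∈ Finset.univ.filter (fun B => B ∩ A = A), c B) ≠ 0
    rw [this]; exact hAprop.2
  · intro x
    set x' : Fin n → H := fun i => if i ∈ A then x i else 0 with hx'
    have key := hc x'
    have hsum : ∀ B : Finset (Fin n), ∑ i ∈ B, x' i = ∑ i ∈ B ∩ A, x i := by
      intro B
      simp [hx', Finset.sum_ite_mem]
    calc ∑ S ∈ A.powerset, (∑ B ∈ Finset.univ.filter (fun B => B ∩ A = S), c B)
            * ‖∑ i ∈ S, x i‖ ^ 2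
        = ∑ S ∈ A.powerset, ∑ B ∈ Finset.univ.filter (fun B => B ∩ A = S),
            c B * ‖∑ i ∈ B ∩ A, x i‖ ^ 2 := by
          refine Finset.sum_congr rfl fun S hS => ?_
          rw [Finset.sum_mul]
          refine Finset.sum_congr rfl fun B hB => ?_
          rw [(Finset.mem_filter.mp hB).2]
      _ = ∑ B : Finset (Fin n), c B * ‖∑ i ∈ B ∩ A, x i‖ ^ 2 := by
          exact Finset.sum_fiberwise_of_maps_to
            (fun B _ => Finset.mem_powerset.mpr (Finset.inter_subset_right)) _
      _ = 0 := by
          rw [← key]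
          exact Finset.sum_congr rfl fun B _ => by rw [hsum B]
end

section
/- Let H be a normed space. Suppose that for some nonempty finite index set A and some real coefficients a_B (B ⊆ A) with a_A ≠ 0, the identity ∑_{B ⊆ A} a_B ‖x_B‖² = 0 holds for all choices of vectors x_i ∈ H, i ∈ A. Then there exists a nonempty finite index set A′ such that the identity ∑_{B ⊆ A′} (−1)^{|A′| − |B|} ‖x_B‖² = 0 holds for all choices of vectors x_i ∈ H, i ∈ A′. -/
open Finset

private lemma neg_one_pow_sub' {n k : ℕ} (h : k ≤ n) :
    ((-1 : ℝ)) ^ (n - k) = (-1) ^ n * (-1) ^ k := by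
  have hnk : n + k = (n - k) + 2 * k := by omega
  have h2 : ((-1 : ℝ)) ^ (n + k) = (-1) ^ (n - k) := by
    rw [hnk, pow_add, pow_mul]; norm_num
  rw [← h2, pow_add]

private lemma sum_powerset_union_disj {ι : Type*} [DecidableEq ι] {β : Type*}
    [AddCommMonoid β] {u v : Finset ι} (huv : Disjoint u v) (f : Finset ι → β) :
    ∑ S ∈ (u ∪ v).powerset, f S = ∑ C ∈ u.powerset, ∑ T ∈ v.powerset, f (C ∪ T) := by
  rw [← Finset.sum_product']
  refine Finset.sum_bij' (fun S _ => (S ∩ u, S ∩ v)) (fun p _ => p.1 ∪ p.2) ?_ ?_ ?_ ?_ ?_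
  · intro S hS
    simp only [Finset.mem_product, Finset.mem_powerset]
    exact ⟨inter_subset_right, inter_subset_right⟩
  · intro p hp
    simp only [Finset.mem_product, Finset.mem_powerset] at hp ⊢
    exact union_subset_union hp.1 hp.2
  · intro S hS
    simp only [Finset.mem_powerset] at hS
    show S ∩ u ∪ S ∩ v = S
    rw [← Finset.inter_union_distrib_left, Finset.inter_eq_left.2 hS]
  · intro p hp
    simp only [Finset.mem_product, Finset.mem_powerset] at hp
    have d1 : Disjoint p.2 u := huv.symm.mono_left hp.2
    have d2 : Disjoint p.1 v := huv.mono_left hp.1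
    have h1 : (p.1 ∪ p.2) ∩ u = p.1 := by
      rw [Finset.union_inter_distrib_right, Finset.inter_eq_left.2 hp.1,
        Finset.disjoint_iff_inter_eq_empty.1 d1, Finset.union_empty]
    have h2 : (p.1 ∪ p.2) ∩ v = p.2 := by
      rw [Finset.union_inter_distrib_right, Finset.inter_eq_left.2 hp.2,
        Finset.disjoint_iff_inter_eq_empty.1 d2, Finset.empty_union]
    exact Prod.ext h1 h2
  · intro S hS
    simp only [Finset.mem_powerset] at hS
    show f S = f (S ∩ u ∪ S ∩ v)
    rw [← Finset.inter_union_distrib_left, Finset.inter_eq_left.2 hS]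

private lemma sum_powerset_neg_one_pow_card_real {ι : Type*} [DecidableEq ι]
    {v : Finset ι} (hv : v.Nonempty) :
    ∑ T ∈ v.powerset, ((-1 : ℝ)) ^ T.card = 0 := by
  have h1 := Finset.sum_powerset_neg_one_pow_card_of_nonempty (x := v) hv
  have h2 : ((∑ m ∈ v.powerset, (-1 : ℤ) ^ m.card : ℤ) : ℝ) = 0 := by rw [h1]; norm_num
  push_cast at h2
  exact h2

theorem stmt9 {H : Type*} [NormedAddCommGroup H] [NormedSpace ℝ H]
    {ι : Type*} [DecidableEq ι] (A : Finset ι) (hA : A.Nonempty)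
    (a : Finset ι → ℝ) (ha : a A ≠ 0)
    (h : ∀ x : ι → H, ∑ B ∈ A.powerset, a B * ‖∑ i ∈ B, x i‖ ^ 2 = 0) :
    ∃ m : ℕ, 0 < m ∧ ∀ x : Fin m → H,
      ∑ B : Finset (Fin m), (-1 : ℝ) ^ (m - B.card) * ‖∑ i ∈ B, x i‖ ^ 2 = 0 := by
  classical
  -- Step 1: the alternating identity over A, for all x : ι → H
  have key : ∀ x : ι → H,
      ∑ C ∈ A.powerset, (-1 : ℝ) ^ (A.card - C.card) * ‖∑ i ∈ C, x i‖ ^ 2 = 0 := by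
    intro x
    set g : Finset ι → ℝ := fun C => ‖∑ i ∈ C, x i‖ ^ 2 with hg
    have T0 : ∑ S ∈ A.powerset, (-1 : ℝ) ^ (A.card - S.card) *
        (∑ B ∈ A.powerset, a B * g (B ∩ S)) = 0 := by
      refine Finset.sum_eq_zero fun S hS => ?_
      have hx := h (fun i => if i ∈ S then x i else 0)
      have hBS : ∀ B ∈ A.powerset,
          (∑ i ∈ B, if i ∈ S then x i else 0) = ∑ i ∈ B ∩ S, x i := by
        intro B _
        rw [Finset.sum_ite_mem B S x]
      rw [Finset.sum_congr rfl (fun B hB => by rw [hBS B hB])] at hx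
      rw [hx, mul_zero]
    have Tswap : ∑ S ∈ A.powerset, (-1 : ℝ) ^ (A.card - S.card) *
        (∑ B ∈ A.powerset, a B * g (B ∩ S)) =
        ∑ B ∈ A.powerset, a B *
          (∑ S ∈ A.powerset, (-1 : ℝ) ^ (A.card - S.card) * g (B ∩ S)) := by
      simp_rw [Finset.mul_sum]
      rw [Finset.sum_comm]
      exact Finset.sum_congr rfl fun B _ => Finset.sum_congr rfl fun S _ => by ring
    -- inner sum vanishes for B ≠ A
    have inner_eq : ∀ B ∈ A.powerset, B ≠ A →
        (∑ S ∈ A.powerset, (-1 : ℝ) ^ (A.card - S.card) * g (B ∩ S)) = 0 := by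
      intro B hB hBA
      rw [Finset.mem_powerset] at hB
      have hsplit : A = B ∪ (A \ B) := (Finset.union_sdiff_of_subset hB).symm
      have hdisj : Disjoint B (A \ B) := Finset.disjoint_sdiff
      have hne : (A \ B).Nonempty :=
        Finset.sdiff_nonempty.2 fun hsub => hBA (Finset.Subset.antisymm hB hsub)
      calc ∑ S ∈ A.powerset, (-1 : ℝ) ^ (A.card - S.card) * g (B ∩ S)
          = ∑ C ∈ B.powerset, ∑ T ∈ (A \ B).powerset,
              (-1 : ℝ) ^ (A.card - (C ∪ T).card) * g (B ∩ (C ∪ T)) := by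
            rw [show A.powerset = (B ∪ (A \ B)).powerset by rw [← hsplit]]
            exact sum_powerset_union_disj hdisj
              (fun S => (-1 : ℝ) ^ (A.card - S.card) * g (B ∩ S))
        _ = ∑ C ∈ B.powerset,
              ((-1 : ℝ) ^ A.card * (-1) ^ C.card * g C) *
                ∑ T ∈ (A \ B).powerset, (-1 : ℝ) ^ T.card := by
            refine Finset.sum_congr rfl fun C hC => ?_
            rw [Finset.mem_powerset] at hC
            rw [Finset.mul_sum]
            refine Finset.sum_congr rfl fun T hT => ?_
            rw [Finset.mem_powerset] at hT
            have hTB : Disjoint T B := (Finset.disjoint_sdiff.symm).mono_left hT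
            have hCT : Disjoint C T := (hdisj.mono_right hT).mono_left hC
            have hBC : B ∩ (C ∪ T) = C := by
              rw [Finset.inter_union_distrib_left, Finset.inter_eq_right.2 hC,
                Finset.disjoint_iff_inter_eq_empty.1 hTB.symm, Finset.union_empty]
            have hcard : (C ∪ T).card = C.card + T.card := Finset.card_union_of_disjoint hCT
            have hle : (C ∪ T).card ≤ A.card := by
              apply Finset.card_le_card
              rw [hsplit]
              exact Finset.union_subset_union hC hT
            rw [hBC, neg_one_pow_sub' hle, hcard, pow_add]
            ring
        _ = 0 := by
            rw [← Finset.sum_mul, sum_powerset_neg_one_pow_card_real hne, mul_zero]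
    have hsingle : ∑ B ∈ A.powerset, a B *
        (∑ S ∈ A.powerset, (-1 : ℝ) ^ (A.card - S.card) * g (B ∩ S)) =
        a A * (∑ S ∈ A.powerset, (-1 : ℝ) ^ (A.card - S.card) * g (A ∩ S)) := by
      refine Finset.sum_eq_single_of_mem A (Finset.mem_powerset_self A) fun B hB hBA => ?_
      rw [inner_eq B hB hBA, mul_zero]
    have hAz : (∑ S ∈ A.powerset, (-1 : ℝ) ^ (A.card - S.card) * g (A ∩ S)) = 0 := by
      have := T0
      rw [Tswap, hsingle] at this
      exact (mul_eq_zero.1 this).resolve_left ha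
    calc ∑ C ∈ A.powerset, (-1 : ℝ) ^ (A.card - C.card) * g C
        = ∑ S ∈ A.powerset, (-1 : ℝ) ^ (A.card - S.card) * g (A ∩ S) := by
          refine Finset.sum_congr rfl fun S hS => ?_
          rw [Finset.mem_powerset] at hS
          rw [Finset.inter_eq_right.2 hS]
      _ = 0 := hAz
  -- Step 2: transfer to Fin m
  refine ⟨A.card, Finset.card_pos.2 hA, fun x => ?_⟩
  set e := A.equivFin with he
  set emb : Fin A.card → ι := fun j => ((e.symm j : {a // a ∈ A}) : ι) with hemb
  have emb_inj : Function.Injective emb :=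
    Subtype.coe_injective.comp e.symm.injective
  have emb_mem : ∀ j, emb j ∈ A := fun j => (e.symm j).2
  set y : ι → H := fun i => if hi : i ∈ A then x (e ⟨i, hi⟩) else 0 with hy
  have y_emb : ∀ j, y (emb j) = x j := by
    intro j
    rw [hy]
    simp only
    rw [dif_pos (emb_mem j)]
    congr 1
    have : (⟨emb j, emb_mem j⟩ : {a // a ∈ A}) = e.symm j := Subtype.ext rfl
    rw [this, Equiv.apply_symm_apply]
  have hkey := key y
  rw [← hkey]
  refine Finset.sum_nbij' (i := fun B => Finset.image emb B)
    (j := fun C => Finset.univ.filter fun j => emb j ∈ C) ?_ ?_ ?_ ?_ ?_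
  · intro B _
    rw [Finset.mem_powerset]
    intro i hi
    rcases Finset.mem_image.1 hi with ⟨j, _, rfl⟩
    exact emb_mem j
  · intro C _
    exact Finset.mem_univ _
  · intro B _
    ext j
    simp only [Finset.mem_filter, Finset.mem_univ, true_and, Finset.mem_image]
    constructor
    · rintro ⟨j', hj', hjj⟩
      rwa [emb_inj hjj] at hj'
    · intro hj; exact ⟨j, hj, rfl⟩
  · intro C hC
    rw [Finset.mem_powerset] at hC
    ext i
    simp only [Finset.mem_image, Finset.mem_filter, Finset.mem_univ, true_and]
    constructor
    · rintro ⟨j, hj, rfl⟩; exact hj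
    · intro hi
      have hiA : i ∈ A := hC hi
      refine ⟨e ⟨i, hiA⟩, ?_, ?_⟩
      · rw [hemb]; simp only [Equiv.symm_apply_apply]; exact hi
      · rw [hemb]; simp only [Equiv.symm_apply_apply]
  · intro B _
    have hcard : (Finset.image emb B).card = B.card :=
      Finset.card_image_of_injective B emb_inj
    have hsum : ∑ i ∈ Finset.image emb B, y i = ∑ j ∈ B, x j := by
      rw [Finset.sum_image fun a _ b _ hab => emb_inj hab]
      exact Finset.sum_congr rfl fun j _ => y_emb j
    rw [hcard, hsum]
end

section
/- Let H be a real normed space. Suppose that for some nonempty finite index set A the identity ∑_{B ⊆ A} (−1)^{|A| − |B|} ‖x_B‖² = 0 holds for all choices of vectors x_i ∈ H, i ∈ A. Then the parallelogram law ‖x + y‖² + ‖x − y‖² = 2‖x‖² + 2‖y‖² holds for all x, y ∈ H, and hence the norm of H is induced by an inner product. -/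
/-!
For `φ = ‖·‖ ^ 2` write `D_s(x, w) = ∑_{B ⊆ s} (-1)^|B| φ(w + x_B)`, up to sign an iterated
finite difference of `φ`. The hypothesis says that these vanish for `s = A`, `n = |A|`, at `w = 0`,
hence at every `w`. Then `D_s(x, ·)` is translation invariant for `|s| = n - 1`,
which makes `D_s(x, 0)` additive in each `x_i`: doubling all `x_i` multiplies it by `2^(n-1)`,
while `φ(2v) = 4 φ(v)` multiplies it by `4`. So for `n - 1 ≥ 3` the `(n-1)`-th differences vanish
as well, and we descend to `n ≤ 3`. There the third differences of `φ` vanish, and taken with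
increments `x, y, -y` this is the parallelogram law.
-/

open Finset Function

section PowersetDiff

variable {G R ι : Type*} [AddCommGroup G] [CommRing R]

/-- `(-1) ^ #s` times the iterated forward difference `Δ_{x i₁} ⋯ Δ_{x iₙ} f` at `w`, where
`s = {i₁, …, iₙ}` and `Δ_v f w = f (w + v) - f w`. -/
def powersetDiff (f : G → R) (s : Finset ι) (x : ι → G) (w : G) : R :=
  ∑ B ∈ s.powerset, (-1 : R) ^ #B * f (w + ∑ i ∈ B, x i)

variable {f : G → R} {s t : Finset ι} {x y : ι → G} {a b : ι} {v w : G}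

theorem powersetDiff_empty : powersetDiff f ∅ x w = f w := by
  simp [powersetDiff]

theorem powersetDiff_congr (h : ∀ i ∈ s, x i = y i) :
    powersetDiff f s x w = powersetDiff f s y w :=
  sum_congr rfl fun B hB => by rw [sum_congr rfl fun i hi => h i (mem_powerset.mp hB hi)]

theorem neg_one_pow_card_mul_powersetDiff_zero :
    (-1) ^ #s * powersetDiff f s x 0 =
      ∑ B ∈ s.powerset, (-1 : R) ^ (#s - #B) * f (∑ i ∈ B, x i) := by
  rw [powersetDiff, mul_sum]
  refine sum_congr rfl fun B hB => Eq.symm ?_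
  have hsign : (-1 : R) ^ #s = (-1) ^ (#s - #B) * (-1) ^ #B := by
    rw [← pow_add, Nat.sub_add_cancel (card_le_card (mem_powerset.mp hB))]
  rw [hsign, zero_add, mul_assoc, ← mul_assoc ((-1) ^ #B), ← mul_pow]
  simp

variable [DecidableEq ι]

theorem powersetDiff_update_of_notMem (ha : a ∉ s) :
    powersetDiff f s (update x a v) w = powersetDiff f s x w :=
  powersetDiff_congr fun _ hi => update_of_ne (ne_of_mem_of_not_mem hi ha) _ _

theorem powersetDiff_insert (ha : a ∉ s) :
    powersetDiff f (insert a s) x w = powersetDiff f s x w - powersetDiff f s x (w + x a) := by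
  rw [powersetDiff, powersetDiff, powersetDiff, sum_powerset_insert ha, sub_eq_add_neg,
    ← sum_neg_distrib]
  congr 1
  refine sum_congr rfl fun B hB => ?_
  have haB : a ∉ B := fun h => ha (mem_powerset.mp hB h)
  rw [card_insert_of_notMem haB, sum_insert haB, pow_succ, ← add_assoc]
  ring

theorem powersetDiff_singleton : powersetDiff f {a} x w = f w - f (w + x a) := by
  rw [← insert_empty_eq, powersetDiff_insert (notMem_empty a), powersetDiff_empty,
    powersetDiff_empty]

theorem powersetDiff_eq_zero_of_eq_zero_at_zero (hs : s.Nonempty)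
    (h : ∀ x, powersetDiff f s x 0 = 0) (x : ι → G) (w : G) : powersetDiff f s x w = 0 := by
  obtain ⟨a, ha⟩ := hs
  have hshift : ∀ v, powersetDiff f (s.erase a) x v = powersetDiff f (s.erase a) x 0 := by
    intro v
    have := h (update x a v)
    rw [← insert_erase ha, powersetDiff_insert (notMem_erase a s), update_self, zero_add,
      powersetDiff_update_of_notMem (notMem_erase a s),
      powersetDiff_update_of_notMem (notMem_erase a s)] at this
    exact (sub_eq_zero.mp this).symm
  rw [← insert_erase ha, powersetDiff_insert (notMem_erase a s), hshift w, hshift (w + x a),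
    sub_self]

theorem powersetDiff_add_right (ha : a ∉ s) (h : ∀ x w, powersetDiff f (insert a s) x w = 0)
    (x : ι → G) (w v : G) : powersetDiff f s x (w + v) = powersetDiff f s x w := by
  have := h (update x a v) w
  rw [powersetDiff_insert ha, update_self, powersetDiff_update_of_notMem ha,
    powersetDiff_update_of_notMem ha] at this
  exact (sub_eq_zero.mp this).symm

theorem powersetDiff_add_add (hb : b ∉ t)
    (h : ∀ x w v, powersetDiff f (insert b t) x (w + v) = powersetDiff f (insert b t) x w)
    (x : ι → G) (w u v : G) :
    powersetDiff f t x (w + u + v) + powersetDiff f t x w =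
      powersetDiff f t x (w + u) + powersetDiff f t x (w + v) := by
  have := h (update x b u) w v
  simp only [powersetDiff_insert hb, update_self, powersetDiff_update_of_notMem hb,
    add_right_comm w v u] at this
  linear_combination -this

theorem powersetDiff_update_add (hb : b ∈ s)
    (h : ∀ x w v, powersetDiff f s x (w + v) = powersetDiff f s x w) (x : ι → G) (u v : G) :
    powersetDiff f s (update x b (u + v)) w =
      powersetDiff f s (update x b u) w + powersetDiff f s (update x b v) w := by
  have hb' : b ∉ s.erase b := notMem_erase b s
  rw [← insert_erase hb] at h ⊢
  simp only [powersetDiff_insert hb', update_self, powersetDiff_update_of_notMem hb']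
  rw [← add_assoc]
  linear_combination -(powersetDiff_add_add hb' h x w u v)

theorem powersetDiff_add_self_of_add_right
    (h : ∀ x w v, powersetDiff f s x (w + v) = powersetDiff f s x w) (x : ι → G) (w : G) :
    powersetDiff f s (x + x) w = 2 ^ #s * powersetDiff f s x w := by
  have hpiece : ∀ E ⊆ s, powersetDiff f s (E.piecewise (x + x) x) w =
      2 ^ #E * powersetDiff f s x w := by
    intro E
    induction E using Finset.induction_on with
    | empty => simp
    | insert a E haE ih =>
      intro hE
      have hfix : update (E.piecewise (x + x) x) a (x a) = E.piecewise (x + x) x := by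
        rw [update_eq_self_iff, piecewise_eq_of_notMem _ _ _ haE]
      rw [piecewise_insert, Pi.add_apply, powersetDiff_update_add (hE (mem_insert_self a E)) h,
        hfix, ih ((subset_insert a E).trans hE), card_insert_of_notMem haE, pow_succ]
      ring
  rw [← hpiece s Subset.rfl]
  exact powersetDiff_congr fun i hi => (piecewise_eq_of_mem _ _ _ hi).symm

omit [DecidableEq ι] in
theorem powersetDiff_add_self_add_self (hf : ∀ v, f (v + v) = 4 * f v) (x : ι → G) (w : G) :
    powersetDiff f s (x + x) (w + w) = 4 * powersetDiff f s x w := by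
  rw [powersetDiff, powersetDiff, mul_sum]
  refine sum_congr rfl fun B _ => ?_
  rw [Pi.add_def, sum_add_distrib, add_add_add_comm, hf]
  ring

/-- A form that is additive in each of `#s ≥ 3` arguments cannot be homogeneous of degree `2`. -/
theorem powersetDiff_eq_zero_of_insert [IsDomain R] [CharZero R] (hf : ∀ v, f (v + v) = 4 * f v)
    (hs : 3 ≤ #s) (ha : a ∉ s) (h : ∀ x w, powersetDiff f (insert a s) x w = 0)
    (x : ι → G) (w : G) : powersetDiff f s x w = 0 := by
  have hinv := powersetDiff_add_right ha h
  have hdouble : 2 ^ #s * powersetDiff f s x 0 = 4 * powersetDiff f s x 0 := by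
    rw [← powersetDiff_add_self_of_add_right hinv, ← powersetDiff_add_self_add_self hf, add_zero]
  have hpow : (2 : R) ^ #s ≠ 4 := by
    have : 2 ^ 3 ≤ 2 ^ #s := Nat.pow_le_pow_right two_pos hs
    exact_mod_cast (by omega : 2 ^ #s ≠ 4)
  rw [← zero_add w, hinv]
  by_contra hne
  exact hpow (mul_right_cancel₀ hne hdouble)

theorem powersetDiff_eq_zero_of_subset [IsDomain R] [CharZero R] (hf : ∀ v, f (v + v) = 4 * f v)
    (hts : t ⊆ s) (ht : 3 ≤ #t) (h : ∀ x w, powersetDiff f s x w = 0) :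
    ∀ x w, powersetDiff f t x w = 0 := by
  have key : ∀ u : Finset ι, Disjoint t u → (∀ x w, powersetDiff f (t ∪ u) x w = 0) →
      ∀ x w, powersetDiff f t x w = 0 := by
    intro u
    induction u using Finset.induction_on with
    | empty => intro _ h; simpa using h
    | insert a u hau ih =>
      intro htu hu
      rw [disjoint_insert_right] at htu
      rw [union_insert] at hu
      exact ih htu.2 (powersetDiff_eq_zero_of_insert hf (ht.trans (card_le_card subset_union_left))
        (by simp [hau, htu.1]) hu)
  rw [← union_sdiff_of_subset hts] at h
  exact key _ disjoint_sdiff h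

end PowersetDiff

section Parallelogram

variable {H ι : Type*} [NormedAddCommGroup H] [DecidableEq ι]

theorem parallelogram_law_of_jensen {c : ι}
    (h : ∀ (x : ι → H) (w u v : H),
      powersetDiff (‖·‖ ^ 2) {c} x (w + u + v) + powersetDiff (‖·‖ ^ 2) {c} x w =
        powersetDiff (‖·‖ ^ 2) {c} x (w + u) + powersetDiff (‖·‖ ^ 2) {c} x (w + v))
    (x y : H) : ‖x + y‖ ^ 2 + ‖x - y‖ ^ 2 = 2 * ‖x‖ ^ 2 + 2 * ‖y‖ ^ 2 := by
  have := h (fun _ => x) 0 y (-y)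
  simp only [powersetDiff_singleton, zero_add, add_neg_cancel, norm_zero, norm_neg] at this
  rw [sub_eq_add_neg, add_comm x y, add_comm x (-y)]
  linarith

theorem parallelogram_law_of_powersetDiff_eq_zero {A : Finset ι} (hA : A.Nonempty) (hA3 : #A ≤ 3)
    (h : ∀ x w, powersetDiff (fun v : H => ‖v‖ ^ 2) A x w = 0) (x y : H) :
    ‖x + y‖ ^ 2 + ‖x - y‖ ^ 2 = 2 * ‖x‖ ^ 2 + 2 * ‖y‖ ^ 2 := by
  have hcard : #A = 1 ∨ #A = 2 ∨ #A = 3 := by have := hA.card_pos; omega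
  rcases hcard with hA1 | hA2 | hA3
  · obtain ⟨c, rfl⟩ := card_eq_one.mp hA1
    exact parallelogram_law_of_jensen (c := c) (by simp only [h, add_zero, implies_true]) x y
  · obtain ⟨b, c, hbc, rfl⟩ := card_eq_two.mp hA2
    have hinv := powersetDiff_add_right (by simpa using hbc) h
    exact parallelogram_law_of_jensen (c := c) (by simp only [hinv, implies_true]) x y
  · obtain ⟨a, b, c, hab, hac, hbc, rfl⟩ := card_eq_three.mp hA3
    exact parallelogram_law_of_jensen
      (powersetDiff_add_add (by simpa using hbc) (powersetDiff_add_right (by simp [hab, hac]) h)) x y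

end Parallelogram

theorem stmt10 {H : Type*} [NormedAddCommGroup H] [NormedSpace ℝ H]
    {ι : Type*} [DecidableEq ι] (A : Finset ι) (hA : A.Nonempty)
    (h : ∀ x : ι → H,
      ∑ B ∈ A.powerset, (-1 : ℝ) ^ (A.card - B.card) * ‖∑ i ∈ B, x i‖ ^ 2 = 0) :
    ∀ x y : H, ‖x + y‖ ^ 2 + ‖x - y‖ ^ 2 = 2 * ‖x‖ ^ 2 + 2 * ‖y‖ ^ 2 := by
  have hA0 : ∀ x, powersetDiff (fun v : H => ‖v‖ ^ 2) A x 0 = 0 := fun x =>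
    (mul_eq_zero.mp ((neg_one_pow_card_mul_powersetDiff_zero (f := (‖·‖ ^ 2))).trans
      (h x))).resolve_left (pow_ne_zero _ (neg_ne_zero.mpr one_ne_zero))
  have hAw := powersetDiff_eq_zero_of_eq_zero_at_zero hA hA0
  have hdouble : ∀ v : H, ‖v + v‖ ^ 2 = 4 * ‖v‖ ^ 2 := fun v => by
    rw [← two_smul ℝ v, norm_smul, Real.norm_two]
    ring
  rcases le_or_gt #A 3 with hA3 | hA3
  · exact parallelogram_law_of_powersetDiff_eq_zero hA hA3 hAw
  · obtain ⟨t, htA, ht⟩ := exists_subset_card_eq hA3.le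
    exact parallelogram_law_of_powersetDiff_eq_zero (card_pos.mp (by omega)) ht.le
      (powersetDiff_eq_zero_of_subset hdouble htA ht.ge hAw)
end

section
/- Let H be a real normed space, let n ≥ 1, and let real coefficients c_B be given for each subset B ⊆ {1,…,n}. Suppose the identity ∑_{B ⊆ {1,…,n}} c_B ‖x_B‖² = 0 holds for all x_1, …, x_n ∈ H, and that c_B ≠ 0 for some nonempty B ⊆ {1,…,n}. Then the parallelogram law ‖x + y‖² + ‖x − y‖² = 2‖x‖² + 2‖y‖² holds for all x, y ∈ H, and hence the norm of H is given by an inner product. -/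
open Finset

section aux
variable {ι : Type*} [DecidableEq ι]

lemma signsum (S U : Finset ι) (hSU : S ⊆ U) (hne : S ≠ U) :
    ∑ T ∈ U.powerset.filter (fun T => S ⊆ T), (-1 : ℝ) ^ T.card = 0 := by
  have key : ∑ T ∈ U.powerset.filter (fun T => S ⊆ T), (-1 : ℝ) ^ T.card
      = ∑ R ∈ (U \ S).powerset, (-1 : ℝ) ^ (S.card + R.card) := by
    refine Finset.sum_nbij' (fun T => T \ S) (fun R => S ∪ R) ?_ ?_ ?_ ?_ ?_
    · intro T hT
      simp only [mem_filter, mem_powerset] at hT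
      exact mem_powerset.2 (sdiff_subset_sdiff hT.1 (Finset.Subset.refl _))
    · intro R hR
      simp only [mem_powerset] at hR
      refine mem_filter.2 ⟨mem_powerset.2 (union_subset hSU ?_), subset_union_left⟩
      exact hR.trans sdiff_subset
    · intro T hT
      simp only [mem_filter, mem_powerset] at hT
      exact union_sdiff_of_subset hT.2
    · intro R hR
      simp only [mem_powerset] at hR
      have hd : Disjoint S R := Finset.disjoint_sdiff.mono_right hR
      simpa using union_sdiff_cancel_left hd
    · intro T hT
      simp only [mem_filter, mem_powerset] at hT
      congr 1
      have h1 := Finset.card_le_card hT.2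
      rw [Finset.card_sdiff_of_subset hT.2]
      omega
  have hne' : (U \ S).Nonempty := by
    rw [Finset.sdiff_nonempty]
    intro h
    exact hne (Finset.Subset.antisymm hSU h)
  have h0 : (∑ m ∈ (U \ S).powerset, (-1 : ℝ) ^ m.card) = 0 := by
    exact_mod_cast congrArg (fun z : ℤ => (z : ℝ))
      (Finset.sum_powerset_neg_one_pow_card_of_nonempty hne')
  rw [key]
  simp only [pow_add]
  rw [← Finset.mul_sum, h0, mul_zero]

end aux

section descent
variable {ι : Type*} [DecidableEq ι] {H : Type*} [NormedAddCommGroup H]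

def czf (T : Finset ι) (w : ι → H) : ℝ :=
  ∑ A ∈ T.powerset, (-1 : ℝ) ^ A.card * ‖∑ j ∈ A, w j‖ ^ 2

def Dp (H : Type*) [NormedAddCommGroup H] (T : Finset ι) : Prop :=
  ∀ z : ι → H, czf T z = 0

def Ep (H : Type*) [NormedAddCommGroup H] (T : Finset ι) : Prop :=
  ∀ (z : ι → H) (x : H),
    ∑ A ∈ T.powerset, (-1 : ℝ) ^ A.card * ‖x + ∑ j ∈ A, z j‖ ^ 2 = czf T z

lemma update_sum_eq {T A : Finset ι} {i : ι} (hi : i ∉ T) (hA : A ⊆ T) (z : ι → H) (v : H) :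
    ∑ j ∈ A, Function.update z i v j = ∑ j ∈ A, z j := by
  refine Finset.sum_congr rfl fun j hj => ?_
  exact Function.update_of_ne (by rintro rfl; exact hi (hA hj)) _ _

lemma D_to_E {i : ι} {T : Finset ι} (hi : i ∉ T) (hD : Dp H (insert i T)) : Ep H T := by
  intro z x
  have h := hD (Function.update z i x)
  unfold czf at h ⊢
  rw [Finset.sum_powerset_insert hi] at h
  have e1 : ∑ A ∈ T.powerset, (-1 : ℝ) ^ A.card * ‖∑ j ∈ A, Function.update z i x j‖ ^ 2
      = ∑ A ∈ T.powerset, (-1 : ℝ) ^ A.card * ‖∑ j ∈ A, z j‖ ^ 2 := by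
    refine Finset.sum_congr rfl fun A hA => ?_
    rw [update_sum_eq hi (mem_powerset.1 hA) z x]
  have e2 : ∑ A ∈ T.powerset,
        (-1 : ℝ) ^ (insert i A).card * ‖∑ j ∈ insert i A, Function.update z i x j‖ ^ 2
      = -∑ A ∈ T.powerset, (-1 : ℝ) ^ A.card * ‖x + ∑ j ∈ A, z j‖ ^ 2 := by
    rw [← Finset.sum_neg_distrib]
    refine Finset.sum_congr rfl fun A hA => ?_
    have hiA : i ∉ A := fun h => hi (mem_powerset.1 hA h)
    rw [Finset.card_insert_of_notMem hiA, Finset.sum_insert hiA,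
      Function.update_self, update_sum_eq hi (mem_powerset.1 hA) z x, pow_succ]
    ring
  rw [e1, e2] at h
  linarith
end descent

section part2
variable {ι : Type*} [DecidableEq ι] {H : Type*} [NormedAddCommGroup H]

lemma czf_update (T' : Finset ι) {i : ι} (hi : i ∉ T') (w : ι → H) (v : H) :
    czf (insert i T') (Function.update w i v)
      = (∑ A ∈ T'.powerset, (-1 : ℝ) ^ A.card * ‖(0 : H) + ∑ j ∈ A, w j‖ ^ 2)
        - ∑ A ∈ T'.powerset, (-1 : ℝ) ^ A.card * ‖v + ∑ j ∈ A, w j‖ ^ 2 := by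
  unfold czf
  rw [Finset.sum_powerset_insert hi]
  have e1 : ∑ A ∈ T'.powerset, (-1 : ℝ) ^ A.card * ‖∑ j ∈ A, Function.update w i v j‖ ^ 2
      = ∑ A ∈ T'.powerset, (-1 : ℝ) ^ A.card * ‖(0 : H) + ∑ j ∈ A, w j‖ ^ 2 := by
    refine Finset.sum_congr rfl fun A hA => ?_
    rw [update_sum_eq hi (mem_powerset.1 hA) w v, zero_add]
  have e2 : ∑ A ∈ T'.powerset,
        (-1 : ℝ) ^ (insert i A).card * ‖∑ j ∈ insert i A, Function.update w i v j‖ ^ 2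
      = -∑ A ∈ T'.powerset, (-1 : ℝ) ^ A.card * ‖v + ∑ j ∈ A, w j‖ ^ 2 := by
    rw [← Finset.sum_neg_distrib]
    refine Finset.sum_congr rfl fun A hA => ?_
    have hiA : i ∉ A := fun h => hi (mem_powerset.1 hA h)
    rw [Finset.card_insert_of_notMem hiA, Finset.sum_insert hiA,
      Function.update_self, update_sum_eq hi (mem_powerset.1 hA) w v, pow_succ]
    ring
  rw [e1, e2]
  ring

lemma czf_update_add {T : Finset ι} (hE : Ep H T) {i : ι} (hi : i ∈ T) (w : ι → H) (a b : H) :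
    czf T (Function.update w i (a + b))
      = czf T (Function.update w i a) + czf T (Function.update w i b) := by
  set T' := T.erase i with hT'
  have hi' : i ∉ T' := Finset.notMem_erase i T
  have hins : insert i T' = T := Finset.insert_erase hi
  set σ : H → ℝ := fun x => ∑ A ∈ T'.powerset, (-1 : ℝ) ^ A.card * ‖x + ∑ j ∈ A, w j‖ ^ 2
    with hσ
  have cval : ∀ v : H, czf T (Function.update w i v) = σ 0 - σ v := by
    intro v
    rw [← hins, czf_update T' hi' w v]
  -- shift property from Ep T
  have shift : ∀ x : H, σ x - σ (x + b) = σ 0 - σ b := by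
    intro x
    have h := hE (Function.update w i b) x
    rw [← hins, Finset.sum_powerset_insert hi'] at h
    have e1 : ∑ A ∈ T'.powerset,
          (-1 : ℝ) ^ A.card * ‖x + ∑ j ∈ A, Function.update w i b j‖ ^ 2 = σ x := by
      refine Finset.sum_congr rfl fun A hA => ?_
      rw [update_sum_eq hi' (mem_powerset.1 hA) w b]
    have e2 : ∑ A ∈ T'.powerset,
          (-1 : ℝ) ^ (insert i A).card * ‖x + ∑ j ∈ insert i A, Function.update w i b j‖ ^ 2
        = -σ (x + b) := by
      rw [hσ, ← Finset.sum_neg_distrib]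
      refine Finset.sum_congr rfl fun A hA => ?_
      have hiA : i ∉ A := fun h => hi' (mem_powerset.1 hA h)
      rw [Finset.card_insert_of_notMem hiA, Finset.sum_insert hiA,
        Function.update_self, update_sum_eq hi' (mem_powerset.1 hA) w b, pow_succ,
        show x + (b + ∑ j ∈ A, w j) = x + b + ∑ j ∈ A, w j by abel]
      ring
    have e3 : czf (insert i T') (Function.update w i b) = σ 0 - σ b := by
      rw [hins]; exact cval b
    rw [e1, e2, e3] at h
    linarith
  have hab : σ (a + b) = σ a + σ b - σ 0 := by
    have := shift a
    have h0 : σ 0 - σ (0 + b) = σ 0 - σ b := by rw [zero_add]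
    linarith
  rw [cval (a + b), cval a, cval b]
  linarith

end part2

section part3
variable {ι : Type*} [DecidableEq ι] {H : Type*} [NormedAddCommGroup H]

lemma E_to_D [NormedSpace ℝ H] {T : Finset ι} (hT : 3 ≤ T.card) (hE : Ep H T) : Dp H T := by
  intro z
  have hmul : ∀ S : Finset ι, S ⊆ T →
      czf T (fun j => if j ∈ S then z j + z j else z j) = 2 ^ S.card * czf T z := by
    intro S
    induction S using Finset.induction_on with
    | empty => intro _; simp
    | @insert i S hiS ih =>
      intro hsub
      have hiT : i ∈ T := hsub (Finset.mem_insert_self i S)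
      have hST : S ⊆ T := fun x hx => hsub (Finset.mem_insert_of_mem hx)
      have f1 : (fun j => if j ∈ insert i S then z j + z j else z j)
          = Function.update (fun j => if j ∈ S then z j + z j else z j) i (z i + z i) := by
        funext j
        rcases eq_or_ne j i with rfl | hj
        · simp [Function.update_self]
        · rw [Function.update_of_ne hj]
          simp [Finset.mem_insert, hj]
      have f2 : (fun j => if j ∈ S then z j + z j else z j)
          = Function.update (fun j => if j ∈ S then z j + z j else z j) i (z i) := by
        funext j
        rcases eq_or_ne j i with rfl | hj
        · simp [Function.update_self, hiS]
        · rw [Function.update_of_ne hj]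
      rw [f1, czf_update_add hE hiT]
      rw [← f2, ih hST, Finset.card_insert_of_notMem hiS]
      ring
  have h4 : czf T (fun j => if j ∈ T then z j + z j else z j) = 4 * czf T z := by
    unfold czf
    rw [Finset.mul_sum]
    refine Finset.sum_congr rfl fun A hA => ?_
    have e : ∑ j ∈ A, (if j ∈ T then z j + z j else z j) = ∑ j ∈ A, z j + ∑ j ∈ A, z j := by
      rw [← Finset.sum_add_distrib]
      exact Finset.sum_congr rfl fun j hj => if_pos (mem_powerset.1 hA hj)
    rw [e]
    have hn : ‖∑ j ∈ A, z j + ∑ j ∈ A, z j‖ = 2 * ‖∑ j ∈ A, z j‖ := by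
      rw [← two_smul ℝ, norm_smul]
      simp
    rw [hn]
    ring
  have h5 := hmul T (Finset.Subset.refl T)
  rw [h4] at h5
  have h8 : (8 : ℝ) ≤ 2 ^ T.card := by
    calc (8 : ℝ) = 2 ^ 3 := by norm_num
    _ ≤ 2 ^ T.card := by
      apply pow_le_pow_right₀ (by norm_num) hT
  nlinarith [h5, h8]

lemma base2 {T : Finset ι} (hcard : T.card = 2) (hE : Ep H T) :
    ∀ u v : H, ‖u + v‖ ^ 2 + ‖u - v‖ ^ 2 = 2 * ‖u‖ ^ 2 + 2 * ‖v‖ ^ 2 := by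
  intro u v
  obtain ⟨i, j, hij, rfl⟩ := Finset.card_eq_two.1 hcard
  set z : ι → H := fun m => if m = i then u else v with hz
  have hnm : i ∉ ({j} : Finset ι) := by simp [hij]
  have expand : ∀ f : Finset ι → ℝ, ∑ t ∈ ({j} : Finset ι).powerset, f t = f ∅ + f {j} := by
    intro f
    rw [show ({j} : Finset ι) = insert j ∅ by simp, Finset.sum_powerset_insert
      (Finset.notMem_empty j), Finset.powerset_empty, Finset.sum_singleton,
      Finset.sum_singleton]
  have h := hE z (-v)
  unfold czf at h
  rw [Finset.sum_powerset_insert hnm, Finset.sum_powerset_insert hnm,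
    expand, expand, expand, expand] at h
  have hzj : z j = v := by simp [hz, hij.symm]
  have hzi : z i = u := by simp [hz]
  simp only [Finset.sum_empty, Finset.sum_singleton,
    Finset.sum_insert (Finset.notMem_empty i),
    Finset.sum_insert (Finset.notMem_singleton.2 hij),
    Finset.card_insert_of_notMem (Finset.notMem_empty i),
    Finset.card_insert_of_notMem (Finset.notMem_singleton.2 hij),
    Finset.card_empty, Finset.card_singleton,
    hzj, hzi, add_zero] at h
  have r1 : ‖-v + v‖ = 0 := by simp
  have r2 : ‖-v + u‖ = ‖u - v‖ := by rw [neg_add_eq_sub]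
  have r3 : ‖-v + (u + v)‖ = ‖u‖ := by rw [show -v + (u + v) = u by abel]
  have r4 : ‖(-v : H)‖ = ‖v‖ := norm_neg v
  rw [r1, r2, r3, r4] at h
  simp at h
  nlinarith [h]

lemma descend [NormedSpace ℝ H] : ∀ m : ℕ, 2 ≤ m → ∀ T : Finset ι, T.card = m → Ep H T →
    ∀ u v : H, ‖u + v‖ ^ 2 + ‖u - v‖ ^ 2 = 2 * ‖u‖ ^ 2 + 2 * ‖v‖ ^ 2 := by
  intro m hm
  induction m, hm using Nat.le_induction with
  | base => intro T hcard hE; exact base2 hcard hE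
  | succ m hm ih =>
    intro T hcard hE
    have hD : Dp H T := E_to_D (by omega) hE
    have hTne : T.Nonempty := Finset.card_pos.1 (by omega)
    obtain ⟨i, hi⟩ := hTne
    have hD' : Dp H (insert i (T.erase i)) := by rwa [Finset.insert_erase hi]
    have hE' : Ep H (T.erase i) := D_to_E (Finset.notMem_erase i T) hD'
    exact ih (T.erase i) (by rw [Finset.card_erase_of_mem hi]; omega) hE'
end part3

theorem stmt11 {H : Type*} [NormedAddCommGroup H] [NormedSpace ℝ H]
    (n : ℕ) (hn : 1 ≤ n) (c : Finset (Fin n) → ℝ)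
    (hc : ∀ x : Fin n → H, ∑ B : Finset (Fin n), c B * ‖∑ i ∈ B, x i‖ ^ 2 = 0)
    (hex : ∃ B : Finset (Fin n), B.Nonempty ∧ c B ≠ 0) :
    ∀ x y : H, ‖x + y‖ ^ 2 + ‖x - y‖ ^ 2 = 2 * ‖x‖ ^ 2 + 2 * ‖y‖ ^ 2 := by
  intro x y
  by_cases hw : ∃ w : H, w ≠ 0
  case neg =>
    push_neg at hw
    rw [hw x, hw y]
    simp
  obtain ⟨w, hw0⟩ := hw
  have hwn : ‖w‖ ≠ 0 := norm_ne_zero_iff.2 hw0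
  have hwsq : ‖w‖ ^ 2 ≠ 0 := pow_ne_zero 2 hwn
  set mu : Finset (Fin n) → ℝ := fun S => ∑ B : Finset (Fin n), (if S ⊆ B then c B else 0)
    with hmu
  have hmudef : ∀ S, mu S = ∑ B : Finset (Fin n), (if S ⊆ B then c B else 0) := fun S => rfl
  -- Step 1: level-1 coefficients vanish
  have h1 : ∀ i : Fin n, (∑ B : Finset (Fin n), if i ∈ B then c B else 0) = 0 := by
    intro i
    have h := hc (fun m => if m = i then w else 0)
    have e : ∀ B : Finset (Fin n), c B * ‖∑ m ∈ B, (if m = i then w else 0)‖ ^ 2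
        = (if i ∈ B then c B else 0) * ‖w‖ ^ 2 := by
      intro B
      rw [Finset.sum_ite_eq' B i (fun _ => w)]
      by_cases hiB : i ∈ B <;> simp [hiB]
    rw [Finset.sum_congr rfl (fun B _ => e B), ← Finset.sum_mul] at h
    rcases mul_eq_zero.1 h with h' | h'
    · exact h'
    · exact absurd h' hwsq
  -- Step 2: level-2 coefficients vanish
  have h2 : ∀ i j : Fin n, i ≠ j →
      (∑ B : Finset (Fin n), if i ∈ B ∧ j ∈ B then c B else 0) = 0 := by
    intro i j hij
    have h := hc (fun m => (if m = i then w else 0) + (if m = j then w else 0))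
    have hww : ‖w + w‖ = 2 * ‖w‖ := by
      rw [show w + w = (2 : ℝ) • w by rw [two_smul], norm_smul]
      simp
    have e : ∀ B : Finset (Fin n),
        c B * ‖∑ m ∈ B, ((if m = i then w else 0) + (if m = j then w else 0))‖ ^ 2
        = ((if i ∈ B then c B else 0) + (if j ∈ B then c B else 0)
            + 2 * (if i ∈ B ∧ j ∈ B then c B else 0)) * ‖w‖ ^ 2 := by
      intro B
      rw [Finset.sum_add_distrib, Finset.sum_ite_eq' B i (fun _ => w),
        Finset.sum_ite_eq' B j (fun _ => w)]
      by_cases hiB : i ∈ B <;> by_cases hjB : j ∈ B <;>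
        simp [hiB, hjB, hww] <;> ring
    rw [Finset.sum_congr rfl (fun B _ => e B), ← Finset.sum_mul] at h
    rcases mul_eq_zero.1 h with h' | h'
    · rw [Finset.sum_add_distrib, Finset.sum_add_distrib, h1 i, h1 j,
        ← Finset.mul_sum] at h'
      linarith
    · exact absurd h' hwsq
  -- Step 3: some nonempty T has mu T ≠ 0
  have h3 : ∃ T : Finset (Fin n), T.Nonempty ∧ mu T ≠ 0 := by
    by_contra hcon
    push_neg at hcon
    have hz : ∀ d : ℕ, ∀ B : Finset (Fin n), B.Nonempty → n - B.card ≤ d → c B = 0 := by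
      intro d
      induction d with
      | zero =>
        intro B hBne hle
        have hble : B.card ≤ n := by simpa using Finset.card_le_univ B
        have hBu : B = Finset.univ :=
          Finset.eq_univ_of_card B (by rw [Fintype.card_fin]; omega)
        have hmuu : mu Finset.univ = c Finset.univ := by
          rw [hmudef]
          simp only [Finset.univ_subset_iff]
          rw [Finset.sum_ite_eq' Finset.univ Finset.univ c, if_pos (Finset.mem_univ _)]
        have huniv_ne : (Finset.univ : Finset (Fin n)).Nonempty :=
          ⟨⟨0, hn⟩, Finset.mem_univ _⟩
        rw [hBu, ← hmuu]
        exact hcon _ huniv_ne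
      | succ d ih =>
        intro B hBne hle
        have key : mu B = c B + ∑ B' : Finset (Fin n), (if B ⊂ B' then c B' else 0) := by
          rw [hmudef]
          have termeq : ∀ B' : Finset (Fin n), (if B ⊆ B' then c B' else 0)
              = (if B' = B then c B' else 0) + (if B ⊂ B' then c B' else 0) := by
            intro B'
            by_cases h1' : B' = B
            · subst h1'
              rw [if_pos (Finset.Subset.refl B'), if_pos rfl,
                if_neg (ssubset_irrefl B'), add_zero]
            · by_cases h2' : B ⊆ B'
              · rw [if_pos h2', if_neg h1',
                  if_pos (Finset.ssubset_iff_subset_ne.2 ⟨h2', Ne.symm h1'⟩), zero_add]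
              · rw [if_neg h2', if_neg h1', if_neg (fun h => h2' h.subset), add_zero]
          rw [Finset.sum_congr rfl (fun B' _ => termeq B'), Finset.sum_add_distrib,
            Finset.sum_ite_eq' Finset.univ B c, if_pos (Finset.mem_univ B)]
        have rest : ∑ B' : Finset (Fin n), (if B ⊂ B' then c B' else 0) = 0 := by
          apply Finset.sum_eq_zero
          intro B' _
          by_cases hss : B ⊂ B'
          · rw [if_pos hss]
            have hlt := Finset.card_lt_card hss
            have hble : B'.card ≤ n := by simpa using Finset.card_le_univ B'
            exact ih B' (Finset.card_pos.1 (by omega)) (by omega)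
          · rw [if_neg hss]
        have hz' := hcon B hBne
        rw [key, rest, add_zero] at hz'
        exact hz'
    obtain ⟨B1, hB1ne, hB1c⟩ := hex
    exact hB1c (hz n B1 hB1ne (by omega))
  -- Step 3.5: minimal such T₀
  have hfilne : (Finset.univ.filter
      (fun T : Finset (Fin n) => T.Nonempty ∧ mu T ≠ 0)).Nonempty := by
    obtain ⟨T, hT1, hT2⟩ := h3
    exact ⟨T, by simp [hT1, hT2]⟩
  obtain ⟨T₀, hT₀mem, hminim⟩ := Finset.exists_min_image _ Finset.card hfilne
  simp only [Finset.mem_filter, Finset.mem_univ, true_and] at hT₀mem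
  obtain ⟨hT₀ne, hmuT₀⟩ := hT₀mem
  have hmin : ∀ S : Finset (Fin n), S.Nonempty → mu S ≠ 0 → T₀.card ≤ S.card :=
    fun S hS1 hS2 => hminim S (by simp [hS1, hS2])
  set k := T₀.card with hk
  have hk1 : 1 ≤ k := Finset.card_pos.2 hT₀ne
  have hk3 : 3 ≤ k := by
    by_contra hcon
    have hcase : k = 1 ∨ k = 2 := by omega
    rcases hcase with h | h
    · obtain ⟨i, hTi⟩ := Finset.card_eq_one.1 (show T₀.card = 1 by omega)
      apply hmuT₀
      rw [hmudef, hTi]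
      refine (Finset.sum_congr rfl fun B _ => ?_).trans (h1 i)
      exact if_congr Finset.singleton_subset_iff rfl rfl
    · obtain ⟨i, j, hij, hTij⟩ := Finset.card_eq_two.1 (show T₀.card = 2 by omega)
      apply hmuT₀
      rw [hmudef, hTij]
      refine (Finset.sum_congr rfl fun B _ => ?_).trans (h2 i j hij)
      refine if_congr ?_ rfl rfl
      simp [Finset.insert_subset_iff, Finset.singleton_subset_iff]
  -- Step 4: gamma coefficients
  set gam : Finset (Fin n) → ℝ := fun A => ∑ B : Finset (Fin n), (if B ∩ T₀ = A then c B else 0)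
    with hgam
  have hgamdef : ∀ A, gam A = ∑ B : Finset (Fin n), (if B ∩ T₀ = A then c B else 0) :=
    fun A => rfl
  have h4a : ∀ S : Finset (Fin n), S ⊆ T₀ →
      mu S = ∑ A ∈ T₀.powerset.filter (fun A => S ⊆ A), gam A := by
    intro S hS
    have hmaps : ∀ B ∈ Finset.univ.filter (fun B : Finset (Fin n) => S ⊆ B),
        B ∩ T₀ ∈ T₀.powerset.filter (fun A => S ⊆ A) := by
      intro B hB
      simp only [Finset.mem_filter, Finset.mem_univ, true_and] at hB ⊢
      exact ⟨Finset.mem_powerset.2 Finset.inter_subset_right, Finset.subset_inter hB hS⟩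
    have hsw := Finset.sum_fiberwise_of_maps_to hmaps c
    rw [hmudef,
      show (∑ B : Finset (Fin n), if S ⊆ B then c B else 0)
        = ∑ B ∈ Finset.univ.filter (fun B => S ⊆ B), c B from (Finset.sum_filter _ _).symm,
      ← hsw]
    apply Finset.sum_congr rfl
    intro A hA
    simp only [Finset.mem_filter, Finset.mem_powerset] at hA
    rw [hgamdef,
      show (∑ B : Finset (Fin n), if B ∩ T₀ = A then c B else 0)
        = ∑ B ∈ Finset.univ.filter (fun B => B ∩ T₀ = A), c B from (Finset.sum_filter _ _).symm]
    congr 1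
    rw [Finset.filter_filter]
    apply Finset.filter_congr
    intro B _
    constructor
    · exact fun h => h.2
    · intro h
      refine ⟨hA.2.trans ?_, h⟩
      rw [← h]
      exact Finset.inter_subset_left
  have hgamT0 : gam T₀ = mu T₀ := by
    have h4aT := h4a T₀ (Finset.Subset.refl T₀)
    have hfil : T₀.powerset.filter (fun A => T₀ ⊆ A) = {T₀} := by
      ext A'
      simp only [Finset.mem_filter, Finset.mem_powerset, Finset.mem_singleton]
      constructor
      · rintro ⟨ha, hb⟩; exact Finset.Subset.antisymm ha hb
      · rintro rfl; exact ⟨Finset.Subset.refl _, Finset.Subset.refl _⟩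
    rw [hfil, Finset.sum_singleton] at h4aT
    exact h4aT.symm
  have hsignk : ((-1 : ℝ)) ^ k * ((-1 : ℝ)) ^ k = 1 := by
    rw [← mul_pow]; norm_num
  have h4b : ∀ d : ℕ, ∀ A : Finset (Fin n), A ⊆ T₀ → A.Nonempty → k - A.card ≤ d →
      gam A = (-1 : ℝ) ^ k * (-1 : ℝ) ^ A.card * mu T₀ := by
    intro d
    induction d with
    | zero =>
      intro A hsub hAne hle
      have hAle := Finset.card_le_card hsub
      have hAeq : A = T₀ := Finset.eq_of_subset_of_card_le hsub (by omega)
      subst hAeq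
      rw [hgamT0, ← hk, hsignk, one_mul]
    | succ d ih =>
      intro A hsub hAne hle
      by_cases hAT : A = T₀
      · subst hAT
        rw [hgamT0, ← hk, hsignk, one_mul]
      · have hmuA : mu A = 0 := by
          by_contra hne0
          have hge := hmin A hAne hne0
          have hlt := Finset.card_lt_card (Finset.ssubset_iff_subset_ne.2 ⟨hsub, hAT⟩)
          omega
        set P := T₀.powerset.filter (fun A' => A ⊆ A') with hP
        have hAP : A ∈ P := by
          simp only [hP, Finset.mem_filter, Finset.mem_powerset]
          exact ⟨hsub, Finset.Subset.refl A⟩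
        have hsplit := Finset.add_sum_erase P gam hAP
        have hrest : ∑ A' ∈ P.erase A, gam A'
            = (-1 : ℝ) ^ k * mu T₀ * ∑ A' ∈ P.erase A, (-1 : ℝ) ^ A'.card := by
          rw [Finset.mul_sum]
          apply Finset.sum_congr rfl
          intro A' hA'
          have hA'P := Finset.mem_of_mem_erase hA'
          have hA'ne : A' ≠ A := Finset.ne_of_mem_erase hA'
          simp only [hP, Finset.mem_filter, Finset.mem_powerset] at hA'P
          have hAA' : A ⊂ A' := Finset.ssubset_iff_subset_ne.2 ⟨hA'P.2, Ne.symm hA'ne⟩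
          have hcards := Finset.card_lt_card hAA'
          have hA'card := Finset.card_le_card hA'P.1
          rw [ih A' hA'P.1 (Finset.card_pos.1 (by omega)) (by omega)]
          ring
        have hsign := Finset.add_sum_erase P (fun A' => (-1 : ℝ) ^ A'.card) hAP
        have hsign0 : ∑ A' ∈ P, (-1 : ℝ) ^ A'.card = 0 := signsum A T₀ hsub hAT
        have hsERS : ∑ A' ∈ P.erase A, (-1 : ℝ) ^ A'.card = -(-1 : ℝ) ^ A.card := by
          rw [hsign0] at hsign
          linarith [hsign]
        rw [hsERS] at hrest
        have hzero : gam A + (-1 : ℝ) ^ k * mu T₀ * -(-1 : ℝ) ^ A.card = 0 := by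
          rw [← hrest]
          calc gam A + ∑ A' ∈ P.erase A, gam A' = ∑ A' ∈ P, gam A' := hsplit
          _ = mu A := (h4a A hsub).symm
          _ = 0 := hmuA
        linear_combination hzero
  have h4c : ∀ z : Fin n → H, ∑ A ∈ T₀.powerset, gam A * ‖∑ i ∈ A, z i‖ ^ 2 = 0 := by
    intro z
    have h := hc (fun i => if i ∈ T₀ then z i else 0)
    have hin : ∀ B : Finset (Fin n),
        ∑ i ∈ B, (if i ∈ T₀ then z i else 0) = ∑ i ∈ B ∩ T₀, z i := by
      intro B
      rw [← Finset.sum_filter, Finset.filter_mem_eq_inter]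
    simp only [hin] at h
    have hmaps : ∀ B ∈ (Finset.univ : Finset (Finset (Fin n))), B ∩ T₀ ∈ T₀.powerset :=
      fun B _ => Finset.mem_powerset.2 Finset.inter_subset_right
    have hsw := Finset.sum_fiberwise_of_maps_to hmaps
      (fun B => c B * ‖∑ i ∈ B ∩ T₀, z i‖ ^ 2)
    rw [← hsw] at h
    rw [← h]
    apply Finset.sum_congr rfl
    intro A hA
    rw [hgamdef,
      show (∑ B : Finset (Fin n), if B ∩ T₀ = A then c B else 0)
        = ∑ B ∈ Finset.univ.filter (fun B => B ∩ T₀ = A), c B from (Finset.sum_filter _ _).symm,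
      Finset.sum_mul]
    apply Finset.sum_congr rfl
    intro B hB
    simp only [Finset.mem_filter] at hB
    rw [hB.2]
  have hD : Dp H T₀ := by
    intro z
    show (∑ A ∈ T₀.powerset, (-1 : ℝ) ^ A.card * ‖∑ j ∈ A, z j‖ ^ 2) = 0
    have hfac : ∑ A ∈ T₀.powerset, gam A * ‖∑ i ∈ A, z i‖ ^ 2
        = ((-1 : ℝ) ^ k * mu T₀) * ∑ A ∈ T₀.powerset, (-1 : ℝ) ^ A.card * ‖∑ i ∈ A, z i‖ ^ 2 := by
      rw [Finset.mul_sum]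
      apply Finset.sum_congr rfl
      intro A hA
      rcases Finset.eq_empty_or_nonempty A with rfl | hAne
      · simp
      · have hAsub := Finset.mem_powerset.1 hA
        have hAle := Finset.card_le_card hAsub
        rw [h4b k A hAsub hAne (by omega)]
        ring
    have hz := h4c z
    rw [hfac] at hz
    rcases mul_eq_zero.1 hz with h' | h'
    · exfalso
      rcases mul_eq_zero.1 h' with h'' | h''
      · exact (pow_ne_zero k (by norm_num : (-1 : ℝ) ≠ 0)) h''
      · exact hmuT₀ h''
    · exact h'
  -- Step 5: descend
  obtain ⟨i₀, hi₀⟩ := hT₀ne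
  have hD' : Dp H (insert i₀ (T₀.erase i₀)) := by rwa [Finset.insert_erase hi₀]
  have hE' : Ep H (T₀.erase i₀) := D_to_E (Finset.notMem_erase i₀ T₀) hD'
  exact descend (k - 1) (by omega) (T₀.erase i₀)
    (by rw [Finset.card_erase_of_mem hi₀]) hE' x y
end

section
/- Let H be a real normed space of dimension at least two, and fix an integer n ≥ 3. Then the parallelogram law ‖x + y‖² + ‖x − y‖² = 2‖x‖² + 2‖y‖² holds for all x, y ∈ H (i.e. the norm of H is induced by an inner product) if and only if the identity ∑_{I ⊆ {1,…,n}} (−1)^{|I|} ‖x_I‖² = 0 holds for all x_1, …, x_n ∈ H. -/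
/-!
For `f = ‖·‖²` write `altSum f x s t = ∑_{I ⊆ s} (-1)^|I| f (t + x_I)`. Adding an index `a` to `s`
turns it into the difference `altSum f x s t - altSum f x s (t + x a)`, so it vanishes identically
as soon as `altSum f x s` is translation invariant for every `x`.

For an inner product norm the two-element sums are the constants `2 ⟪x a, x b⟫`, so all sums
over three or more indices vanish. Conversely, if the sums over `n` indices vanish at `0`, those
over `n - 1` indices are translation invariant, hence additive in each vector. Doubling all `m`
vectors then multiplies the sum by `2 ^ m` by additivity and by `4` since `f (2 • t) = 4 * f t`,
so it vanishes unless `m = 2`. Descending to three indices and evaluating at `(x, y, -y)` gives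
the parallelogram law.
-/

open Finset

section CommRing

variable {ι G R : Type*} [AddCommGroup G] [CommRing R]

def altSum (f : G → R) (x : ι → G) (s : Finset ι) (t : G) : R :=
  ∑ I ∈ s.powerset, (-1) ^ #I * f (t + ∑ i ∈ I, x i)

variable {f : G → R} {x y : ι → G} {s : Finset ι}

@[simp]
lemma altSum_empty (f : G → R) (x : ι → G) (t : G) : altSum f x ∅ t = f t := by
  simp [altSum]

lemma altSum_congr (h : Set.EqOn x y s) : altSum f x s = altSum f y s := by
  funext t
  refine sum_congr rfl fun I hI => ?_
  rw [sum_congr rfl fun i hi => h (mem_powerset.1 hI hi)]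

lemma altSum_two_nsmul_two_nsmul (hf : ∀ t, f (2 • t) = 4 * f t) (x : ι → G) (s : Finset ι)
    (t : G) : altSum f (2 • x) s (2 • t) = 4 * altSum f x s t := by
  simp only [altSum, mul_sum, Pi.smul_apply, ← smul_sum, ← smul_add, hf]
  exact sum_congr rfl fun _ _ => by ring

variable [DecidableEq ι]

lemma altSum_insert {a : ι} (ha : a ∉ s) (t : G) :
    altSum f x (insert a s) t = altSum f x s t - altSum f x s (t + x a) := by
  simp only [altSum]
  rw [sum_powerset_insert ha, sub_eq_add_neg, ← sum_neg_distrib]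
  congr 1
  refine sum_congr rfl fun I hI => ?_
  have haI : a ∉ I := fun h => ha (mem_powerset.1 hI h)
  rw [card_insert_of_notMem haI, sum_insert haI, ← add_assoc, pow_succ]
  ring

@[simp]
lemma altSum_singleton (f : G → R) (x : ι → G) (a : ι) (t : G) :
    altSum f x {a} t = f t - f (t + x a) := by
  rw [← insert_empty, altSum_insert (notMem_empty a), altSum_empty, altSum_empty]

lemma altSum_eq_altSum_zero_of_insert {a : ι} (ha : a ∉ s)
    (h : ∀ y, altSum f y (insert a s) 0 = 0) (x : ι → G) (t : G) :
    altSum f x s t = altSum f x s 0 := by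
  have hx := h (Function.update x a t)
  rw [altSum_insert ha, zero_add, Function.update_self,
    altSum_congr fun i hi => Function.update_of_ne (ne_of_mem_of_not_mem hi ha) t x] at hx
  exact (sub_eq_zero.1 hx).symm

lemma altSum_insert_eq_zero {a : ι} (ha : a ∉ s) (hs : ∀ y t, altSum f y s t = altSum f y s 0)
    (x : ι → G) (t : G) : altSum f x (insert a s) t = 0 := by
  rw [altSum_insert ha, hs x t, hs x (t + x a), sub_self]

lemma altSum_update_add (hs : ∀ y t, altSum f y s t = altSum f y s 0) {b : ι} (hb : b ∈ s)
    (u v t : G) :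
    altSum f (Function.update x b (u + v)) s t =
      altSum f (Function.update x b u) s t + altSum f (Function.update x b v) s t := by
  have key : ∀ w t, altSum f (Function.update x b w) s t =
      altSum f x (s.erase b) t - altSum f x (s.erase b) (t + w) := by
    intro w t
    conv_lhs => rw [← insert_erase hb]
    rw [altSum_insert (notMem_erase b s), Function.update_self,
      altSum_congr fun i hi => Function.update_of_ne (ne_of_mem_erase hi) w x]
  have hv := hs (Function.update x b v) u
  rw [key, key, zero_add] at hv
  rw [hs _ t, hs _ t, hs _ t, key, key, key, zero_add, zero_add, zero_add]
  linear_combination hv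

lemma altSum_two_nsmul (hs : ∀ y t, altSum f y s t = altSum f y s 0) (x : ι → G) (t : G) :
    altSum f (2 • x) s t = 2 ^ #s * altSum f x s t := by
  have hpiece : ∀ A ⊆ s, altSum f (A.piecewise (2 • x) x) s t = 2 ^ #A * altSum f x s t := by
    intro A
    induction A using Finset.induction_on with
    | empty => simp
    | insert b A hb ih =>
      intro hA
      have hbA : A.piecewise (2 • x) x b = x b := piecewise_eq_of_notMem _ _ _ hb
      rw [piecewise_insert, Pi.smul_apply, two_nsmul (x b),
        altSum_update_add hs (hA (mem_insert_self b A)), ← hbA, Function.update_eq_self,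
        ih ((subset_insert b A).trans hA), card_insert_of_notMem hb, pow_succ]
      ring
  rw [← hpiece s Subset.rfl, altSum_congr fun i hi => (piecewise_eq_of_mem _ _ _ hi).symm]

lemma exists_altSum_eq_parallelogram {s : Finset ι} (hs : #s = 3) (f : G → R) (u v : G) :
    ∃ x : ι → G, altSum f x s 0 = 2 * f 0 - 2 * f u - f v - f (-v) + f (u + v) + f (u - v) := by
  obtain ⟨a, b, c, hab, hac, hbc, rfl⟩ := card_eq_three.1 hs
  refine ⟨fun i => if i = a then u else if i = b then v else -v, ?_⟩
  rw [altSum_insert (by simp [hab, hac]), altSum_insert (by simp [hbc]),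
    altSum_insert (by simp [hbc])]
  simp only [altSum_singleton, hab.symm, hac.symm, hbc.symm, ↓reduceIte, zero_add, sub_eq_add_neg,
    add_neg_cancel, neg_add_rev, neg_neg, add_neg_cancel_right]
  ring

end CommRing

section Field

variable {ι G R : Type*} [AddCommGroup G] [Field R] [CharZero R] [DecidableEq ι]
  {f : G → R} {s : Finset ι}

lemma altSum_eq_zero_of_translation_invariant (hf : ∀ t, f (2 • t) = 4 * f t)
    (hs : ∀ y t, altSum f y s t = altSum f y s 0) (hcard : #s ≠ 2) (x : ι → G) (t : G) :
    altSum f x s t = 0 := by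
  have hsmul := altSum_two_nsmul hs x 0
  have hhomog := altSum_two_nsmul_two_nsmul hf x s 0
  rw [smul_zero] at hhomog
  have hpow : (2 : R) ^ #s - 4 ≠ 0 := by
    rw [sub_ne_zero]
    intro h
    have h' : 2 ^ #s = 2 ^ 2 := by exact_mod_cast h.trans (by norm_num : (4 : R) = 2 ^ 2)
    exact hcard (Nat.pow_right_injective le_rfl h')
  have hzero : (2 ^ #s - 4) * altSum f x s 0 = 0 := by linear_combination hhomog - hsmul
  rw [hs, (mul_eq_zero.1 hzero).resolve_left hpow]

lemma altSum_eq_zero_of_altSum_univ [Fintype ι] (hf : ∀ t, f (2 • t) = 4 * f t)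
    (h : ∀ x : ι → G, altSum f x univ 0 = 0) (hs : 3 ≤ #s) (x : ι → G) (t : G) :
    altSum f x s t = 0 := by
  revert x t hs
  refine strongDownwardInduction (p := fun s => 3 ≤ #s → ∀ x t, altSum f x s t = 0)
    (fun s ih _ hs x t => ?_) s (card_le_univ s)
  by_cases hsu : s = univ
  · subst hsu
    obtain ⟨a, -⟩ := card_pos.1 (by omega : 0 < #(univ : Finset ι))
    have ha := notMem_erase a univ
    rw [← insert_erase (mem_univ a)] at h ⊢
    exact altSum_insert_eq_zero ha (altSum_eq_altSum_zero_of_insert ha h) x t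
  · obtain ⟨a, -, ha⟩ := exists_of_ssubset (ssubset_univ_iff.2 hsu)
    have hins : ∀ y, altSum f y (insert a s) 0 = 0 := fun y =>
      ih (card_le_univ _) (ssubset_insert ha) (by rw [card_insert_of_notMem ha]; omega) y 0
    exact altSum_eq_zero_of_translation_invariant hf (altSum_eq_altSum_zero_of_insert ha hins)
      (by omega) x t

end Field

section InnerProductSpace

variable {ι E : Type*} [NormedAddCommGroup E] [InnerProductSpace ℝ E] [DecidableEq ι]

lemma altSum_norm_sq_pair {a b : ι} (hab : a ≠ b) (x : ι → E) (t : E) :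
    altSum (‖·‖ ^ 2) x {a, b} t = 2 * inner ℝ (x a) (x b) := by
  rw [altSum_insert (notMem_singleton.2 hab), altSum_singleton, altSum_singleton,
    norm_add_sq_real t, norm_add_sq_real (t + x a), norm_add_sq_real t, inner_add_left]
  ring

lemma altSum_norm_sq_eq_zero {s : Finset ι} (hs : 3 ≤ #s) (x : ι → E) (t : E) :
    altSum (‖·‖ ^ 2) x s t = 0 := by
  induction s using Finset.induction_on generalizing x t with
  | empty => simp at hs
  | insert a s ha ih =>
    rw [card_insert_of_notMem ha] at hs
    refine altSum_insert_eq_zero ha (fun y t => ?_) x t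
    rcases (by omega : 3 ≤ #s ∨ #s = 2) with h3 | h2
    · rw [ih h3, ih h3]
    · obtain ⟨b, c, hbc, rfl⟩ := card_eq_two.1 h2
      rw [altSum_norm_sq_pair hbc, altSum_norm_sq_pair hbc]

end InnerProductSpace

theorem stmt13_general {H : Type*} [NormedAddCommGroup H] [NormedSpace ℝ H]
    (n : ℕ) (hn : 3 ≤ n) :
    (∀ x y : H, ‖x + y‖ ^ 2 + ‖x - y‖ ^ 2 = 2 * ‖x‖ ^ 2 + 2 * ‖y‖ ^ 2) ↔
      ∀ x : Fin n → H,
        ∑ I : Finset (Fin n), (-1 : ℝ) ^ I.card * ‖∑ i ∈ I, x i‖ ^ 2 = 0 := by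
  have hsum (x : Fin n → H) : ∑ I : Finset (Fin n), (-1 : ℝ) ^ I.card * ‖∑ i ∈ I, x i‖ ^ 2 =
      altSum (‖·‖ ^ 2) x univ 0 := by
    simp [altSum, powerset_univ]
  simp only [hsum]
  have hcard : 3 ≤ #(univ : Finset (Fin n)) := by simpa using hn
  constructor
  · intro h x
    let _ := InnerProductSpace.ofNorm ℝ (E := H) fun u v => by simp only [← sq]; linarith [h u v]
    exact altSum_norm_sq_eq_zero hcard x 0
  · intro h u v
    have hf (t : H) : ‖2 • t‖ ^ 2 = 4 * ‖t‖ ^ 2 := by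
      rw [← Nat.cast_smul_eq_nsmul ℝ, norm_smul, mul_pow]
      norm_num
    obtain ⟨s, -, hs⟩ := exists_subset_card_eq hcard
    obtain ⟨x, hx⟩ := exists_altSum_eq_parallelogram hs (‖·‖ ^ 2) u v
    rw [altSum_eq_zero_of_altSum_univ hf h (by omega) x 0] at hx
    simp only [norm_zero, norm_neg] at hx
    linear_combination -hx

theorem stmt13 {H : Type*} [NormedAddCommGroup H] [NormedSpace ℝ H]
    (hdim : 2 ≤ Module.rank ℝ H) (n : ℕ) (hn : 3 ≤ n) :
    (∀ x y : H, ‖x + y‖ ^ 2 + ‖x - y‖ ^ 2 = 2 * ‖x‖ ^ 2 + 2 * ‖y‖ ^ 2) ↔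
      ∀ x : Fin n → H,
        ∑ I : Finset (Fin n), (-1 : ℝ) ^ I.card * ‖∑ i ∈ I, x i‖ ^ 2 = 0 :=
  stmt13_general n hn
end

section
/- Let g : ℝ → ℝ be a continuous function and let n ≥ 1 be an integer. If for all r, s ∈ ℝ one has ∑_{k=0}^{n} C(n, k) (−1)^{n−k} g(r + k·s) = 0, then g is (given by) a real polynomial of degree less than n. -/
/-!
The hypothesis says that the `n`-th forward difference `Δ_s^n g` vanishes for every step `s`.
Along a lattice `cℤ` this is a linear recurrence of order `n`, so `m ↦ g (m c)` agrees with the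
polynomial of degree `< n` interpolating its values at `0, …, n - 1`. Rescaling the polynomial
found on `(1/d)ℤ` by `d` gives one that agrees with the polynomial `P` found on `ℤ` at every
integer, hence equals it; so `g = P` on `ℚ`, and by continuity on `ℝ`.
-/

open Finset Polynomial fwdDiff

section FwdDiff

variable {M M' G : Type*} [AddCommMonoid M] [AddCommMonoid M'] [AddCommGroup G]

lemma fwdDiff_iter_comp_addMonoidHom (φ : M →+ M') (f : M' → G) (h : M) (n : ℕ) :
    (Δ_[h])^[n] (f ∘ φ) = ((Δ_[φ h])^[n] f) ∘ φ := by
  induction n generalizing f with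
  | zero => rfl
  | succ n ih =>
    have hstep : Δ_[h] (f ∘ φ) = Δ_[φ h] f ∘ φ := by
      ext y
      simp [fwdDiff, map_add]
    rw [Function.iterate_succ_apply, Function.iterate_succ_apply, hstep, ih]

lemma fwdDiff_iter_sub (f f' : M → G) (h : M) (n : ℕ) :
    (Δ_[h])^[n] (f - f') = (Δ_[h])^[n] f - (Δ_[h])^[n] f' := by
  simpa only [fwdDiff_aux.coe_fwdDiffₗ_pow] using map_sub (fwdDiff_aux.fwdDiffₗ M G h ^ n) f f'

lemma fwdDiff_iter_zero (h : M) (n : ℕ) : (Δ_[h])^[n] (fun _ ↦ (0 : G) : M → G) = fun _ ↦ 0 :=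
  Function.iterate_fixed (fwdDiff_const h 0) n

end FwdDiff

lemma Int.eq_apply_zero_of_fwdDiff_eq_zero {G : Type*} [AddCommGroup G] {w : ℤ → G}
    (h : Δ_[1] w = 0) (m : ℤ) : w m = w 0 := by
  have hstep (k : ℤ) : w (k + 1) = w k := sub_eq_zero.1 (congrFun h k)
  induction m using Int.induction_on with
  | zero => rfl
  | succ k ih => rw [hstep, ih]
  | pred k ih => rw [← ih, ← hstep (-k - 1), sub_add_cancel]

lemma Int.eq_zero_of_fwdDiff_iter_eq_zero {G : Type*} [AddCommGroup G] {n : ℕ} {w : ℤ → G}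
    (h : (Δ_[1])^[n] w = 0) (h0 : ∀ k < n, w k = 0) : w = 0 := by
  induction n generalizing w with
  | zero => exact h
  | succ n ih =>
    have hΔ : Δ_[1] w = 0 := by
      refine ih (by rwa [← Function.iterate_succ_apply]) fun k hk => ?_
      have h1 : w (k + 1) = 0 := by exact_mod_cast h0 (k + 1) (by omega)
      simp [fwdDiff, h1, h0 k (by omega)]
    funext m
    rw [Int.eq_apply_zero_of_fwdDiff_eq_zero hΔ m]
    exact_mod_cast h0 0 n.succ_pos

lemma Polynomial.fwdDiff_iter_eval_eq_zero_of_degree_lt {R : Type*} [CommRing R] {P : R[X]}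
    {n : ℕ} (hP : P.degree < n) : (Δ_[1])^[n] P.eval = 0 := by
  rcases eq_or_ne P 0 with rfl | hP0
  · simp only [eval_zero]
    exact fwdDiff_iter_zero 1 n
  · exact fwdDiff_iter_eq_zero_of_degree_lt ((natDegree_lt_iff_degree_lt hP0).2 hP)

lemma Int.exists_polynomial_of_fwdDiff_iter_eq_zero {K : Type*} [Field K] [CharZero K] {n : ℕ}
    {w : ℤ → K} (h : (Δ_[1])^[n] w = 0) :
    ∃ Q : K[X], Q.degree < n ∧ ∀ m : ℤ, w m = Q.eval (m : K) := by
  have hinj : Set.InjOn (fun k : ℕ => (k : K)) (Finset.range n) :=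
    fun a _ b _ hab => Nat.cast_injective hab
  set Q := Lagrange.interpolate (Finset.range n) (fun k : ℕ => (k : K)) (fun k => w k)
  have hQ : Q.degree < n := by
    simpa only [Finset.card_range] using Lagrange.degree_interpolate_lt _ hinj
  refine ⟨Q, hQ, fun m => sub_eq_zero.1 (congrFun (?_ : w - Q.eval ∘ Int.cast = 0) m)⟩
  refine Int.eq_zero_of_fwdDiff_iter_eq_zero (n := n) ?_ fun k hk => ?_
  · have hQΔ := fwdDiff_iter_comp_addMonoidHom (Int.castAddHom K) Q.eval 1 n
    rw [show Int.castAddHom K 1 = 1 from Int.cast_one,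
      fwdDiff_iter_eval_eq_zero_of_degree_lt hQ, Pi.zero_comp] at hQΔ
    rw [fwdDiff_iter_sub, h, show Q.eval ∘ Int.cast = Q.eval ∘ Int.castAddHom K from rfl, hQΔ,
      sub_zero]
  · have := Lagrange.eval_interpolate_at_node (fun k : ℕ => w k) hinj (Finset.mem_range.2 hk)
    simp only [Pi.sub_apply, Function.comp_apply, Int.cast_natCast, Q, this, sub_self]

lemma Polynomial.eq_of_forall_eval_intCast_eq {R : Type*} [CommRing R] [IsDomain R] [CharZero R]
    {p q : R[X]} (h : ∀ m : ℤ, p.eval (m : R) = q.eval (m : R)) : p = q :=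
  eq_of_infinite_eval_eq p q <|
    Set.infinite_of_injective_forall_mem Int.cast_injective fun m => h m

lemma apply_ratCast_eq_eval_of_forall_zmultiples {K : Type*} [Field K] [CharZero K]
    {g : K → K} {P : K[X]} (hgrid : ∀ c : K, ∃ Q : K[X], ∀ m : ℤ, g (m * c) = Q.eval (m : K))
    (hP : ∀ m : ℤ, g m = P.eval (m : K)) (x : ℚ) : g x = P.eval (x : K) := by
  set d : K := (x.den : K)
  have hd : d ≠ 0 := Nat.cast_ne_zero.2 x.den_nz
  obtain ⟨Q, hQ⟩ := hgrid d⁻¹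
  have hQP : Q.comp (C d * X) = P := eq_of_forall_eval_intCast_eq fun m => by
    have := hQ (m * x.den)
    push_cast at this
    rw [mul_inv_cancel_right₀ hd] at this
    rw [eval_comp, eval_mul, eval_C, eval_X, ← hP, this, mul_comm]
  rw [← hQP, eval_comp, eval_mul, eval_C, eval_X, Rat.cast_def, mul_div_cancel₀ _ hd,
    ← hQ, div_eq_mul_inv]

theorem stmt16_general (g : ℝ → ℝ) (hg : Continuous g) (n : ℕ)
    (h : ∀ r s : ℝ, ∑ k ∈ Finset.range (n + 1),
        (n.choose k : ℝ) * (-1) ^ (n - k) * g (r + k * s) = 0) :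
    ∃ P : Polynomial ℝ, P.degree < n ∧ ∀ t : ℝ, g t = P.eval t := by
  have hΔ (s : ℝ) : (Δ_[s])^[n] g = 0 := funext fun r => by
    rw [fwdDiff_iter_eq_sum_shift, Pi.zero_apply, ← h r s]
    refine sum_congr rfl fun k _ => ?_
    simp only [zsmul_eq_mul, nsmul_eq_mul]
    push_cast
    ring
  have hgrid (c : ℝ) : ∃ Q : ℝ[X], Q.degree < n ∧ ∀ m : ℤ, g (m * c) = Q.eval (m : ℝ) := by
    refine Int.exists_polynomial_of_fwdDiff_iter_eq_zero ?_
    have := fwdDiff_iter_comp_addMonoidHom (zmultiplesHom ℝ c) g 1 n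
    rw [zmultiplesHom_apply, one_zsmul, hΔ, Pi.zero_comp] at this
    simpa [Function.comp_def] using this
  obtain ⟨P, hPdeg, hP⟩ := hgrid 1
  have hPℚ := apply_ratCast_eq_eval_of_forall_zmultiples (fun c => (hgrid c).imp fun _ => And.right)
    (by simpa using hP)
  refine ⟨P, hPdeg, congrFun (Continuous.ext_on Rat.denseRange_cast hg P.continuous ?_)⟩
  rintro _ ⟨x, rfl⟩
  exact hPℚ x

theorem stmt16 (g : ℝ → ℝ) (hg : Continuous g) (n : ℕ) (hn : 1 ≤ n)
    (h : ∀ r s : ℝ, ∑ k ∈ Finset.range (n + 1),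
        (n.choose k : ℝ) * (-1) ^ (n - k) * g (r + k * s) = 0) :
    ∃ P : Polynomial ℝ, P.degree < n ∧ ∀ t : ℝ, g t = P.eval t :=
  stmt16_general g hg n h
end
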